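/- arXiv:2404.01279 — 2 statements merged into one kernel-verified Lean document; each statement's English description precedes it below -/
import Mathlib

section
/- Let K and K' be admissible d-complexes on disjoint finite vertex sets S and S', and let K # K' be their connected sum along facets F of K and F' of K', with central vertices the identified pairs. Then there exists an integral (d+1)-chain α on the vertex set of K # K' with ∂α = K # K' and |α|₁ = V_ℤ(K # K') such that every oriented (d+1)-simplex appearing in α with nonzero coefficient is either entirely on the vertices of K (central vertices included) or entirely on the vertices of K' (central vertices included). -/
/-!
Framework: oriented simplicial chains on a finite vertex set.

An oriented `n`-simplex on a vertex set `V` is an `(n+1)`-tuple of distinct vertices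
up to even permutation; an odd permutation yields the oppositely oriented simplex.
An `n`-chain with coefficients in `R` is encoded as an *alternating* function
`c : (Fin (n+1) → V) → R`: the value `c f` is the coefficient of the oriented
simplex represented by the tuple `f`, and reversing orientation negates it.
-/

/-- `c` is an `n`-chain: it is alternating under permutations of the tuple
(so an oriented simplex and its orientation reversal are identified up to sign). -/
def IsAltChain {V : Type*} (n : ℕ) {R : Type*} [AddCommGroup R]
    (c : (Fin (n + 1) → V) → R) : Prop :=
  ∀ (σ : Equiv.Perm (Fin (n + 1))) (f : Fin (n + 1) → V),
    c (f ∘ σ) = (Equiv.Perm.sign σ : ℤ) • c f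

/-- The boundary operator: `∂` sends `[v₀,…,vₙ]` to `Σᵢ (−1)ⁱ [v₀,…,v̂ᵢ,…,vₙ]`;
in the alternating-function encoding this is `(∂c) g = Σ_{v} c (v ∷ g)`. -/
def bdry {V : Type*} [Fintype V] {n : ℕ} {R : Type*} [AddCommMonoid R]
    (c : (Fin (n + 1) → V) → R) : (Fin n → V) → R :=
  fun g => ∑ v : V, c (Fin.cons v g)

/-- 1-norm of an integral chain: sum of the absolute values of the coefficients,
one per oriented simplex (each simplex has `(n+1)!` tuple representatives). -/
noncomputable def normZ {V : Type*} [Fintype V] [DecidableEq V] {n : ℕ}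
    (c : (Fin (n + 1) → V) → ℤ) : ℝ :=
  (∑ f : Fin (n + 1) → V, |(c f : ℝ)|) / (Nat.factorial (n + 1) : ℝ)

/-- 1-norm of a rational chain. -/
noncomputable def normQ {V : Type*} [Fintype V] [DecidableEq V] {n : ℕ}
    (c : (Fin (n + 1) → V) → ℚ) : ℝ :=
  (∑ f : Fin (n + 1) → V, |(c f : ℝ)|) / (Nat.factorial (n + 1) : ℝ)

/-- An admissible `d`-complex on `V`: an integral `d`-chain in which every oriented
`d`-simplex appears with coefficient `0` or `1` (i.e. every tuple has coefficient
`-1`, `0` or `1`), and whose boundary vanishes. Its *facets* are the oriented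
simplices (tuples) with coefficient `1`. -/
structure IsAdmissible {V : Type*} [Fintype V] (d : ℕ)
    (K : (Fin (d + 1) → V) → ℤ) : Prop where
  chain : IsAltChain d K
  coeff : ∀ f, K f = -1 ∨ K f = 0 ∨ K f = 1
  closed : ∀ g, bdry K g = 0

/-- `V_ℤ(K)`: the minimum 1-norm of an integral `(d+1)`-chain `α` with `∂α = K`
(the minimum is attained, so it equals this infimum). -/
noncomputable def VZ {V : Type*} [Fintype V] [DecidableEq V] (d : ℕ)
    (K : (Fin (d + 1) → V) → ℤ) : ℝ :=
  sInf { x : ℝ | ∃ α : (Fin (d + 2) → V) → ℤ,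
    IsAltChain (d + 1) α ∧ (∀ g, bdry α g = K g) ∧ x = normZ α }

/-- `V_ℚ(K)`: the minimum 1-norm of a rational `(d+1)`-chain `α` with `∂α = K`
(the minimum is attained, so it equals this infimum). -/
noncomputable def VQ {V : Type*} [Fintype V] [DecidableEq V] (d : ℕ)
    (K : (Fin (d + 1) → V) → ℤ) : ℝ :=
  sInf { x : ℝ | ∃ α : (Fin (d + 2) → V) → ℚ,
    IsAltChain (d + 1) α ∧ (∀ g, bdry α g = (K g : ℚ)) ∧ x = normQ α }

/-- The unit-flux constraint: for every oriented `(d+1)`-simplex `t` on `V`,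
the total flux through its oriented boundary facets is at most `1`. -/
def UnitFlux {V : Type*} (d : ℕ) (φ : (Fin (d + 1) → V) → ℝ) : Prop :=
  ∀ t : Fin (d + 2) → V, Function.Injective t →
    ∑ i : Fin (d + 2), (-1 : ℝ) ^ (i : ℕ) * φ (t ∘ i.succAbove) ≤ 1

/-- `φ(F₁) + ⋯ + φ(Fₙ)`, the sum of a flux function over the facets of `K`
(each facet has `(d+1)!` tuple representatives `f`, on which `K f * φ f` agree). -/
noncomputable def fluxSum {V : Type*} [Fintype V] (d : ℕ)
    (φ : (Fin (d + 1) → V) → ℝ) (K : (Fin (d + 1) → V) → ℤ) : ℝ :=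
  (∑ f : Fin (d + 1) → V, (K f : ℝ) * φ f) / (Nat.factorial (d + 1) : ℝ)

/-- Pushforward of a chain along a map of vertex sets `q : V → W`
(simplices whose image is degenerate die). -/
def pushChain {V W : Type*} [Fintype V] [DecidableEq W] (q : V → W) {n : ℕ}
    {R : Type*} [AddCommMonoid R] (c : (Fin n → V) → R) : (Fin n → W) → R :=
  fun f => ∑ g : Fin n → V, if q ∘ g = f then c g else 0

/-- The chain consisting of the single oriented simplex `[s 0, …, s n]`. -/
def simplexChain {V : Type*} [DecidableEq V] {n : ℕ} (s : Fin (n + 1) → V) :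
    (Fin (n + 1) → V) → ℤ :=
  fun f => ∑ σ : Equiv.Perm (Fin (n + 1)),
    if f = s ∘ σ then (Equiv.Perm.sign σ : ℤ) else 0

/-- The chain of the disjoint union `K ⊔ K'` on `V ⊕ V'`: it is `K + K'`. -/
def unionChain {V V' : Type*} [Fintype V] [Fintype V'] [DecidableEq V] [DecidableEq V']
    {n : ℕ} (K : (Fin n → V) → ℤ) (K' : (Fin n → V') → ℤ) : (Fin n → V ⊕ V') → ℤ :=
  fun f => pushChain Sum.inl K f + pushChain Sum.inr K' f

/-- The chain of the connected sum `K # K'` on the glued vertex set `W`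
(with gluing maps `j : V → W`, `j' : V' → W` identifying the facet `vF` of `K`
with the facet `vF'` of `K'`): the image of `K + K' − F − F'` under the gluing. -/
def connSum {V V' W : Type*} [Fintype V] [Fintype V'] [DecidableEq V] [DecidableEq V']
    [DecidableEq W] {d : ℕ} (K : (Fin (d + 1) → V) → ℤ) (K' : (Fin (d + 1) → V') → ℤ)
    (vF : Fin (d + 1) → V) (vF' : Fin (d + 1) → V') (j : V → W) (j' : V' → W) :
    (Fin (d + 1) → W) → ℤ :=
  pushChain (Sum.elim j j')
    (fun g : Fin (d + 1) → V ⊕ V' =>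
      pushChain Sum.inl K g + pushChain Sum.inr K' g
        - pushChain Sum.inl (simplexChain vF) g - pushChain Sum.inr (simplexChain vF') g)

section Helpers

open Equiv Finset

variable {V W : Type*}

/-- An alternating chain vanishes on non-injective tuples. -/
lemma IsAltChain.eq_zero_of_not_inj {n : ℕ} {c : (Fin (n + 1) → V) → ℤ}
    (hc : IsAltChain n c) {t : Fin (n + 1) → V} (ht : ¬ Function.Injective t) :
    c t = 0 := by
  simp only [Function.Injective, not_forall] at ht
  obtain ⟨i, j, hij, hne⟩ := ht
  have hσ : t ∘ (Equiv.swap i j) = t := by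
    funext k
    rcases eq_or_ne k i with rfl | hki
    · simp [Equiv.swap_apply_left, hij]
    rcases eq_or_ne k j with rfl | hkj
    · simp [Equiv.swap_apply_right, hij]
    · simp [Equiv.swap_apply_of_ne_of_ne hki hkj]
  have := hc (Equiv.swap i j) t
  rw [hσ, Equiv.Perm.sign_swap hne] at this
  simp at this
  omega

lemma pushChain_alt [Fintype V] [DecidableEq W] (q : V → W) {n : ℕ}
    {c : (Fin (n + 1) → V) → ℤ} (hc : IsAltChain n c) :
    IsAltChain n (pushChain q c) := by
  intro σ f
  unfold pushChain
  rw [Finset.smul_sum]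
  refine Fintype.sum_equiv (Equiv.arrowCongr σ (Equiv.refl V)) _ _ (fun x => ?_)
  have he : (Equiv.arrowCongr σ (Equiv.refl V)) x = x ∘ ⇑σ.symm := rfl
  rw [he]
  by_cases h : q ∘ x = f ∘ ⇑σ
  · have h1 : q ∘ (x ∘ ⇑σ.symm) = f := by
      funext k; have := congrFun h (σ.symm k); simpa using this
    have h2 := hc σ (x ∘ ⇑σ.symm)
    have h3 : (x ∘ ⇑σ.symm) ∘ ⇑σ = x := by funext k; simp
    rw [h3] at h2
    rw [if_pos h, if_pos h1, h2]
  · have h1 : ¬ q ∘ (x ∘ ⇑σ.symm) = f := by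
      intro hq; apply h; funext k; have := congrFun hq (σ k); simpa using this
    rw [if_neg h, if_neg h1, smul_zero]

lemma altChain_add {n : ℕ} {c c' : (Fin (n + 1) → V) → ℤ}
    (hc : IsAltChain n c) (hc' : IsAltChain n c') :
    IsAltChain n (fun f => c f + c' f) := by
  intro σ f
  simp only []
  rw [hc σ f, hc' σ f, smul_add]

end Helpers
section Helpers2

open Equiv Finset

variable {V W X : Type*}

lemma sum_tuple_succ [Fintype V] {n : ℕ} {M : Type*} [AddCommMonoid M]
    (F : (Fin (n + 1) → V) → M) :
    ∑ h : Fin (n + 1) → V, F h = ∑ v : V, ∑ g : Fin n → V, F (Fin.cons v g) := by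
  calc ∑ h : Fin (n + 1) → V, F h
      = ∑ x : V × (Fin n → V), F (Fin.cons x.1 x.2) :=
        (Fintype.sum_equiv (Fin.consEquiv (fun _ => V)) _ _ (fun x => rfl)).symm
    _ = ∑ v : V, ∑ g : Fin n → V, F (Fin.cons v g) := Fintype.sum_prod_type _

lemma pushChain_bdry [Fintype V] [Fintype W] [DecidableEq W] (q : V → W) {n : ℕ}
    (c : (Fin (n + 1) → V) → ℤ) (g : Fin n → W) :
    bdry (pushChain q c) g = pushChain q (bdry c) g := by
  unfold bdry pushChain
  rw [Finset.sum_comm]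
  rw [sum_tuple_succ (fun h => ∑ w : W, if q ∘ h = Fin.cons w g then c h else 0)]
  have key : ∀ (v : V) (g' : Fin n → V),
      (∑ w : W, if q ∘ Fin.cons v g' = Fin.cons w g then c (Fin.cons v g') else 0)
      = if q ∘ g' = g then c (Fin.cons v g') else 0 := by
    intro v g'
    rw [Finset.sum_eq_single (q v)]
    · congr 1
      rw [Fin.comp_cons]
      simp [Fin.cons_inj, eq_comm]
    · intro w _ hw
      rw [if_neg]
      rw [Fin.comp_cons, Fin.cons_inj]
      rintro ⟨h1, -⟩
      exact hw h1.symm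
    · intro h
      exact absurd (Finset.mem_univ _) h
  simp only [key]
  rw [Finset.sum_comm]
  refine Finset.sum_congr rfl (fun g' _ => ?_)
  by_cases h : q ∘ g' = g <;> simp [h]

lemma pushChain_comp [Fintype V] [Fintype W] [DecidableEq W] [DecidableEq X]
    (q : W → X) (p : V → W) {n : ℕ} (c : (Fin n → V) → ℤ) (f : Fin n → X) :
    pushChain q (pushChain p c) f = pushChain (q ∘ p) c f := by
  unfold pushChain
  have : ∀ g : Fin n → W,
      (if q ∘ g = f then (∑ h : Fin n → V, if p ∘ h = g then c h else 0) else 0)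
      = ∑ h : Fin n → V, if q ∘ g = f ∧ p ∘ h = g then c h else 0 := by
    intro g
    split
    · congr 1; funext h; simp [*]
    · simp [*]
  simp only [this]
  rw [Finset.sum_comm]
  congr 1
  funext h
  rw [Finset.sum_eq_single (p ∘ h)]
  · simp [Function.comp_assoc]
  · intro g _ hg
    rw [if_neg]
    rintro ⟨-, h2⟩
    exact hg h2.symm
  · intro h
    exact absurd (Finset.mem_univ _) h

end Helpers2
section Helpers3

open Equiv Finset

variable {V W X : Type*}

lemma simplexChain_alt [DecidableEq V] {n : ℕ} (s : Fin (n + 1) → V) :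
    IsAltChain n (simplexChain s) := by
  intro τ f
  unfold simplexChain
  rw [Finset.smul_sum]
  refine Fintype.sum_equiv (Equiv.mulRight τ⁻¹) _ _ (fun σ => ?_)
  have he : (Equiv.mulRight τ⁻¹) σ = σ * τ⁻¹ := rfl
  rw [he]
  have hcond : (f ∘ ⇑τ = s ∘ ⇑σ) ↔ (f = s ∘ ⇑(σ * τ⁻¹)) := by
    constructor <;> intro h
    · funext k
      have := congrFun h (τ⁻¹ k)
      simpa [Equiv.Perm.mul_apply] using this
    · funext k
      have := congrFun h (τ k)
      simpa [Equiv.Perm.mul_apply] using this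
  have hs : Equiv.Perm.sign (σ * τ⁻¹) = Equiv.Perm.sign σ * Equiv.Perm.sign τ := by
    simp [Equiv.Perm.sign_mul]
  by_cases h : f ∘ ⇑τ = s ∘ ⇑σ
  · rw [if_pos h, if_pos (hcond.mp h), hs]
    rcases Int.units_eq_one_or (Equiv.Perm.sign τ) with h1 | h1 <;>
      rcases Int.units_eq_one_or (Equiv.Perm.sign σ) with h2 | h2 <;> simp [h1, h2]
  · rw [if_neg h, if_neg (fun hh => h (hcond.mpr hh)), smul_zero]

lemma simplexChain_comp_perm [DecidableEq V] {n : ℕ} (s : Fin (n + 1) → V)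
    (ρ : Equiv.Perm (Fin (n + 1))) (f : Fin (n + 1) → V) :
    simplexChain (s ∘ ρ) f = (Equiv.Perm.sign ρ : ℤ) • simplexChain s f := by
  unfold simplexChain
  rw [Finset.smul_sum]
  refine Fintype.sum_equiv (Equiv.mulLeft ρ) _ _ (fun σ => ?_)
  have he : (Equiv.mulLeft ρ) σ = ρ * σ := rfl
  rw [he]
  have hcond : (f = (s ∘ ⇑ρ) ∘ ⇑σ) ↔ (f = s ∘ ⇑(ρ * σ)) := Iff.rfl
  have hs : Equiv.Perm.sign (ρ * σ) = Equiv.Perm.sign ρ * Equiv.Perm.sign σ :=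
    Equiv.Perm.sign_mul _ _
  by_cases h : f = (s ∘ ⇑ρ) ∘ ⇑σ
  · rw [if_pos h, if_pos (hcond.mp h), hs]
    rcases Int.units_eq_one_or (Equiv.Perm.sign ρ) with h1 | h1 <;>
      rcases Int.units_eq_one_or (Equiv.Perm.sign σ) with h2 | h2 <;> simp [h1, h2]
  · rw [if_neg h, if_neg (fun hh => h (hcond.mpr hh)), smul_zero]

lemma pushChain_simplexChain [Fintype V] [DecidableEq V] [DecidableEq W]
    (q : V → W) {n : ℕ} (s : Fin (n + 1) → V) (f : Fin (n + 1) → W) :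
    pushChain q (simplexChain s) f = simplexChain (q ∘ s) f := by
  unfold pushChain simplexChain
  have : ∀ g : Fin (n + 1) → V,
      (if q ∘ g = f then (∑ σ : Equiv.Perm (Fin (n + 1)),
        if g = s ∘ σ then (Equiv.Perm.sign σ : ℤ) else 0) else 0)
      = ∑ σ : Equiv.Perm (Fin (n + 1)),
        if q ∘ g = f ∧ g = s ∘ σ then (Equiv.Perm.sign σ : ℤ) else 0 := by
    intro g
    split
    · congr 1; funext σ; simp [*]
    · simp [*]
  simp only [this]
  rw [Finset.sum_comm]
  refine Finset.sum_congr rfl (fun σ _ => ?_)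
  rw [Finset.sum_eq_single (s ∘ ⇑σ)]
  · simp [Function.comp_assoc, eq_comm]
  · intro g _ hg
    rw [if_neg]
    rintro ⟨-, h2⟩
    exact hg h2
  · intro h
    exact absurd (Finset.mem_univ _) h

lemma pushChain_add' [Fintype V] [DecidableEq W] (q : V → W) {n : ℕ}
    (a b : (Fin n → V) → ℤ) (f : Fin n → W) :
    pushChain q (fun x => a x + b x) f = pushChain q a f + pushChain q b f := by
  unfold pushChain
  rw [← Finset.sum_add_distrib]
  refine Finset.sum_congr rfl (fun g _ => ?_)
  split <;> simp

lemma pushChain_sub' [Fintype V] [DecidableEq W] (q : V → W) {n : ℕ}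
    (a b : (Fin n → V) → ℤ) (f : Fin n → W) :
    pushChain q (fun x => a x - b x) f = pushChain q a f - pushChain q b f := by
  unfold pushChain
  rw [← Finset.sum_sub_distrib]
  refine Finset.sum_congr rfl (fun g _ => ?_)
  split <;> simp

lemma bdry_add' [Fintype V] {n : ℕ} (a b : (Fin (n + 1) → V) → ℤ) (g : Fin n → V) :
    bdry (fun x => a x + b x) g = bdry a g + bdry b g := by
  unfold bdry
  rw [← Finset.sum_add_distrib]

end Helpers3
section Helpers4

open Equiv Finset

variable {V W : Type*}

/-- If `q` maps into the range of an injective `(d+1)`-tuple `u`, and `c` is a closed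
alternating `d`-chain, then the pushforward of `c` along `q` vanishes. -/
lemma pushChain_eq_zero_of_small_range [Fintype V] [Fintype W] [DecidableEq W] {d : ℕ}
    (q : V → W) (c : (Fin (d + 1) → V) → ℤ) (hc : IsAltChain d c)
    (hclosed : ∀ g, bdry c g = 0) (u : Fin (d + 1) → W) (hu : Function.Injective u)
    (hq : ∀ v, ∃ i, q v = u i) (f : Fin (d + 1) → W) :
    pushChain q c f = 0 := by
  have halt : IsAltChain d (pushChain q c) := pushChain_alt q hc
  have hnotin : ∀ f : Fin (d + 1) → W, (∃ i, ∀ k, f i ≠ u k) → pushChain q c f = 0 := by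
    rintro f ⟨i, hi⟩
    refine Finset.sum_eq_zero (fun g _ => ?_)
    rw [if_neg]
    intro h
    obtain ⟨k, hk⟩ := hq (g i)
    exact hi k ((congrFun h i).symm.trans hk)
  have hm : pushChain q c u = 0 := by
    have hb := pushChain_bdry q c (Fin.tail u)
    have hz : pushChain q (bdry c) (Fin.tail u) = 0 :=
      Finset.sum_eq_zero (fun g _ => by rw [hclosed]; simp)
    rw [hz] at hb
    rw [← hb]
    unfold bdry
    rw [Finset.sum_eq_single (u 0)]
    · rw [Fin.cons_self_tail]
    · intro w _ hw
      by_cases hex : ∃ k, w = u k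
      · obtain ⟨k, rfl⟩ := hex
        have hk0 : k ≠ 0 := fun h => hw (by rw [h])
        obtain ⟨k', rfl⟩ : ∃ k', k'.succ = k := ⟨k.pred hk0, Fin.succ_pred k hk0⟩
        refine halt.eq_zero_of_not_inj (fun hinj => ?_)
        have : Fin.cons (u k'.succ) (Fin.tail u) 0 = Fin.cons (u k'.succ) (Fin.tail u) k'.succ := by
          rw [Fin.cons_zero, Fin.cons_succ]
          rfl
        exact (Fin.succ_ne_zero k') (hinj this).symm
      · push_neg at hex
        refine hnotin _ ⟨0, ?_⟩
        simpa using hex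
    · intro h
      exact absurd (Finset.mem_univ _) h
  by_cases hinj : Function.Injective f
  · by_cases hall : ∀ i, ∃ k, f i = u k
    · choose k hk using hall
      have hkinj : Function.Injective k := by
        intro i i' h
        exact hinj ((hk i).trans (h ▸ (hk i').symm))
      have hkbij : Function.Bijective k := Finite.injective_iff_bijective.mp hkinj
      let σ : Equiv.Perm (Fin (d + 1)) := Equiv.ofBijective k hkbij
      have hf : f = u ∘ ⇑σ := funext (fun i => hk i)
      rw [hf, halt σ u, hm, smul_zero]
    · push_neg at hall
      obtain ⟨i, hi⟩ := hall
      exact hnotin f ⟨i, hi⟩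
  · exact halt.eq_zero_of_not_inj hinj

end Helpers4
section Cone

open Equiv Finset

variable {W : Type*}

/-- Cone of a chain over the vertex `w₀`. -/
def coneChain [DecidableEq W] (w₀ : W) {n : ℕ} (c : (Fin (n + 1) → W) → ℤ) :
    (Fin (n + 2) → W) → ℤ :=
  fun t => ∑ p : Fin (n + 2), (if p = 0 then 1 else -1) *
    (if t p = w₀ then c (fun y => t (Equiv.swap 0 p y.succ)) else 0)

/-- Fully symmetrized cone. -/
def permCone [DecidableEq W] (w₀ : W) {n : ℕ} (c : (Fin (n + 1) → W) → ℤ) :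
    (Fin (n + 2) → W) → ℤ :=
  fun t => ∑ σ : Equiv.Perm (Fin (n + 2)), (Equiv.Perm.sign σ : ℤ) *
    (if t (σ 0) = w₀ then c (fun y => t (σ y.succ)) else 0)

lemma permCone_perm [DecidableEq W] (w₀ : W) {n : ℕ} (c : (Fin (n + 1) → W) → ℤ)
    (τ : Equiv.Perm (Fin (n + 2))) (t : Fin (n + 2) → W) :
    permCone w₀ c (t ∘ τ) = (Equiv.Perm.sign τ : ℤ) • permCone w₀ c t := by
  unfold permCone
  rw [Finset.smul_sum]
  refine Fintype.sum_equiv (Equiv.mulLeft τ) _ _ (fun σ => ?_)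
  show (Equiv.Perm.sign σ : ℤ) *
      (if t (τ (σ 0)) = w₀ then c (fun y => t (τ (σ y.succ))) else 0)
    = (Equiv.Perm.sign τ : ℤ) • ((Equiv.Perm.sign (τ * σ) : ℤ) *
      (if t (τ (σ 0)) = w₀ then c (fun y => t (τ (σ y.succ))) else 0))
  rw [Equiv.Perm.sign_mul]
  rcases Int.units_eq_one_or (Equiv.Perm.sign τ) with h1 | h1 <;>
    rcases Int.units_eq_one_or (Equiv.Perm.sign σ) with h2 | h2 <;>
      simp [h1, h2]

lemma permCone_eq [DecidableEq W] (w₀ : W) {n : ℕ} {c : (Fin (n + 1) → W) → ℤ}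
    (hc : IsAltChain n c) (t : Fin (n + 2) → W) :
    permCone w₀ c t = (Nat.factorial (n + 1) : ℤ) * coneChain w₀ c t := by
  unfold permCone coneChain
  rw [← Equiv.sum_comp (Equiv.Perm.decomposeFin).symm
    (fun σ => (Equiv.Perm.sign σ : ℤ) * (if t (σ 0) = w₀ then c (fun y => t (σ y.succ)) else 0))]
  rw [Fintype.sum_prod_type, Finset.mul_sum]
  refine Finset.sum_congr rfl (fun p _ => ?_)
  have hterm : ∀ e : Equiv.Perm (Fin (n + 1)),
      (Equiv.Perm.sign (Equiv.Perm.decomposeFin.symm (p, e)) : ℤ) *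
        (if t (Equiv.Perm.decomposeFin.symm (p, e) 0) = w₀ then
          c (fun y => t (Equiv.Perm.decomposeFin.symm (p, e) y.succ)) else 0)
      = (if p = 0 then 1 else -1) *
        (if t p = w₀ then c (fun y => t (Equiv.swap 0 p y.succ)) else 0) := by
    intro e
    rw [Equiv.Perm.decomposeFin.symm_sign, Equiv.Perm.decomposeFin_symm_apply_zero]
    have harg : (fun y => t (Equiv.Perm.decomposeFin.symm (p, e) y.succ))
        = (fun y => t (Equiv.swap 0 p y.succ)) ∘ ⇑e := by
      funext y
      simp [Equiv.Perm.decomposeFin_symm_apply_succ]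
    rw [harg, hc e]
    rcases Int.units_eq_one_or (Equiv.Perm.sign e) with h1 | h1 <;>
      by_cases hp : p = 0 <;> by_cases ht : t p = w₀ <;>
        simp [h1, hp, ht]
  rw [Finset.sum_congr rfl (fun e _ => hterm e)]
  rw [Finset.sum_const, Finset.card_univ, Fintype.card_perm, Fintype.card_fin]
  rw [nsmul_eq_mul]

lemma coneChain_alt [DecidableEq W] (w₀ : W) {n : ℕ} {c : (Fin (n + 1) → W) → ℤ}
    (hc : IsAltChain n c) : IsAltChain (n + 1) (coneChain w₀ c) := by
  intro τ t
  have hfac : (Nat.factorial (n + 1) : ℤ) ≠ 0 := by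
    exact_mod_cast Nat.factorial_ne_zero (n + 1)
  have h2 : (Nat.factorial (n + 1) : ℤ) * coneChain w₀ c (t ∘ ⇑τ)
      = (Equiv.Perm.sign τ : ℤ) • ((Nat.factorial (n + 1) : ℤ) * coneChain w₀ c t) := by
    rw [← permCone_eq w₀ hc, ← permCone_eq w₀ hc, permCone_perm]
  rcases Int.units_eq_one_or (Equiv.Perm.sign τ) with hs | hs <;> rw [hs] at h2 ⊢
  · simp only [Units.val_one, one_smul] at h2 ⊢
    exact mul_left_cancel₀ hfac h2
  · simp only [Units.val_neg, Units.val_one, neg_smul, one_smul] at h2 ⊢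
    exact mul_left_cancel₀ hfac (h2.trans (by ring))

end Cone
section ConeBdry

open Equiv Finset

variable {W : Type*}

lemma update_eq_cons_comp_cycleRange {n : ℕ} (s : Fin (n + 1) → W) (j : Fin (n + 1)) (v : W) :
    Function.update s j v = (Fin.cons v (s ∘ j.succAbove)) ∘ ⇑(Fin.cycleRange j) := by
  funext k
  rcases eq_or_ne k j with rfl | hk
  · simp [Fin.cycleRange_self]
  · obtain ⟨m, rfl⟩ := Fin.exists_succAbove_eq hk
    have h1 : Fin.cycleRange j (j.succAbove m) = m.succ := Fin.cycleRange_succAbove j m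
    simp only [Function.comp_apply, h1, Fin.cons_succ, Function.comp_apply]
    rw [Function.update_of_ne hk]

lemma bdry_coneChain [Fintype W] [DecidableEq W] (w₀ : W) {n : ℕ}
    {c : (Fin (n + 1) → W) → ℤ} (hc : IsAltChain n c) (hclosed : ∀ g, bdry c g = 0)
    (s : Fin (n + 1) → W) : bdry (coneChain w₀ c) s = c s := by
  unfold bdry coneChain
  rw [Finset.sum_comm]
  rw [Fin.sum_univ_succ]
  have h0 : (∑ v : W, (if (0 : Fin (n + 2)) = 0 then (1 : ℤ) else -1) *
      (if Fin.cons (α := fun _ => W) v s 0 = w₀ then c (fun y : Fin (n + 1) => Fin.cons (α := fun _ => W) v s (Equiv.swap (0 : Fin (n + 2)) 0 y.succ)) else 0))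
      = c s := by
    have : ∀ v : W, (fun y : Fin (n + 1) => Fin.cons (α := fun _ => W) v s (Equiv.swap (0 : Fin (n + 2)) (0 : Fin (n + 2)) y.succ)) = s := by
      intro v
      funext y
      simp [Equiv.swap_self]
    simp only [this, if_pos rfl, one_mul, Fin.cons_zero]
    simp
  rw [h0]
  have hsucc : ∀ j : Fin (n + 1), (∑ v : W, (if (j.succ : Fin (n + 2)) = 0 then (1 : ℤ) else -1) *
      (if Fin.cons (α := fun _ => W) v s j.succ = w₀ then c (fun y : Fin (n + 1) => Fin.cons (α := fun _ => W) v s (Equiv.swap (0 : Fin (n + 2)) j.succ y.succ)) else 0))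
      = 0 := by
    intro j
    have harg : ∀ v : W, (fun y : Fin (n + 1) => Fin.cons (α := fun _ => W) v s (Equiv.swap (0 : Fin (n + 2)) j.succ y.succ))
        = Function.update s j v := by
      intro v
      funext y
      rcases eq_or_ne y j with rfl | hy
      · simp [Equiv.swap_apply_right]
      · rw [Equiv.swap_apply_of_ne_of_ne (Fin.succ_ne_zero y) (fun h => hy (Fin.succ_injective _ h))]
        rw [Fin.cons_succ, Function.update_of_ne hy]
    simp only [harg, Fin.cons_succ, if_neg (Fin.succ_ne_zero j), Fin.succ_ne_zero]
    by_cases hs : s j = w₀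
    · have hsum : (∑ v : W, c (Function.update s j v)) = 0 := by
        have : ∀ v : W, c (Function.update s j v)
            = (Equiv.Perm.sign (Fin.cycleRange j) : ℤ) • c (Fin.cons v (s ∘ j.succAbove)) := by
          intro v
          rw [update_eq_cons_comp_cycleRange s j v]
          exact hc (Fin.cycleRange j) (Fin.cons v (s ∘ j.succAbove))
        simp only [this]
        rw [← Finset.smul_sum]
        have hb : (∑ v : W, c (Fin.cons v (s ∘ j.succAbove))) = 0 := hclosed (s ∘ j.succAbove)
        rw [hb, smul_zero]
      simp [Finset.sum_neg_distrib, hsum]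
    · simp [hs]
  rw [Finset.sum_congr rfl (fun j _ => hsucc j)]
  simp

end ConeBdry
section Norm

open Equiv Finset

variable {W : Type*}

lemma pushChain_abs_le [Fintype W] [DecidableEq W] {n : ℕ} (s : W → W)
    {α : (Fin (n + 1) → W) → ℤ} (hα : IsAltChain n α) :
    (∑ t : Fin (n + 1) → W, |pushChain s α t|)
      ≤ ∑ g : Fin (n + 1) → W, (if Function.Injective (s ∘ g) then |α g| else 0) := by
  classical
  have halt := pushChain_alt s hα
  have step1 : (∑ t : Fin (n + 1) → W, |pushChain s α t|)
      = ∑ t : Fin (n + 1) → W, (if Function.Injective t then |pushChain s α t| else 0) := by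
    refine Finset.sum_congr rfl (fun t _ => ?_)
    by_cases ht : Function.Injective t
    · rw [if_pos ht]
    · rw [if_neg ht, halt.eq_zero_of_not_inj ht, abs_zero]
  rw [step1]
  have step2 : ∀ t : Fin (n + 1) → W,
      (if Function.Injective t then |pushChain s α t| else 0)
      ≤ ∑ g : Fin (n + 1) → W, (if Function.Injective t ∧ s ∘ g = t then |α g| else 0) := by
    intro t
    by_cases ht : Function.Injective t
    · rw [if_pos ht]
      unfold pushChain
      refine le_trans (Finset.abs_sum_le_sum_abs _ _) ?_
      refine Finset.sum_le_sum (fun g _ => ?_)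
      by_cases hg : s ∘ g = t
      · simp [hg, ht]
      · simp [hg]
    · simp only [if_neg ht, false_and, if_false]
      positivity
  refine le_trans (Finset.sum_le_sum (fun t _ => step2 t)) ?_
  rw [Finset.sum_comm]
  refine le_of_eq (Finset.sum_congr rfl (fun g _ => ?_))
  rw [Finset.sum_eq_single (s ∘ g)]
  · by_cases h : Function.Injective (s ∘ g) <;> simp [h]
  · intro t _ ht
    rw [if_neg]
    rintro ⟨-, h2⟩
    exact ht h2.symm
  · intro h
    exact absurd (Finset.mem_univ _) h

end Norm

set_option maxHeartbeats 2000000 in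
/-- There is an optimal integral decomposition of `K # K'` in which every
`(d+1)`-simplex lies entirely on the vertices of `K` (central vertices included)
or entirely on the vertices of `K'` (central vertices included). -/
theorem stmt11 {V V' W : Type*} [Fintype V] [DecidableEq V]
    [Fintype V'] [DecidableEq V'] [Fintype W] [DecidableEq W] (d : ℕ)
    (K : (Fin (d + 1) → V) → ℤ) (K' : (Fin (d + 1) → V') → ℤ)
    (hK : IsAdmissible d K) (hK' : IsAdmissible d K')
    (vF : Fin (d + 1) → V) (hvF : Function.Injective vF) (hFfacet : K vF = 1)
    (vF' : Fin (d + 1) → V') (hvF' : Function.Injective vF') (hFfacet' : K' vF' = 1)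
    (j : V → W) (j' : V' → W) (hj : Function.Injective j) (hj' : Function.Injective j')
    (hcover : ∀ w : W, (∃ v, j v = w) ∨ (∃ v', j' v' = w))
    (hmeet : ∀ (v : V) (v' : V'), j v = j' v' → ∃ i, v = vF i)
    (ρ : Equiv.Perm (Fin (d + 1))) (hρ : Equiv.Perm.sign ρ = -1)
    (hglue : ∀ i, j (vF i) = j' (vF' (ρ i)))
    (hadm : IsAdmissible d (connSum K K' vF vF' j j')) :
    ∃ α : (Fin (d + 2) → W) → ℤ, IsAltChain (d + 1) α ∧
      (∀ g, bdry α g = connSum K K' vF vF' j j' g) ∧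
      normZ α = VZ d (connSum K K' vF vF' j j') ∧
      ∀ t : Fin (d + 2) → W, α t ≠ 0 →
        (∀ i, ∃ v, t i = j v) ∨ (∀ i, ∃ v', t i = j' v') := by
  classical
  -- d ≥ 1
  have hd : d ≠ 0 := by
    intro hd0
    subst hd0
    have hfin1 : ∀ x : Fin (0 + 1), x = 0 := fun x => Fin.eq_of_val_eq (by omega)
    have hone : ρ = 1 := Equiv.ext (fun i => (hfin1 _).trans (hfin1 _).symm)
    rw [hone, Equiv.Perm.sign_one] at hρ
    exact absurd hρ (by decide)
  have hzo : (0 : Fin (d + 1)) ≠ 1 := by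
    intro h
    rw [eq_comm, Fin.one_eq_zero_iff] at h
    omega
  set L := connSum K K' vF vF' j j' with hLdef
  have hLalt : IsAltChain d L := hadm.chain
  have hLclosed : ∀ g, bdry L g = 0 := hadm.closed
  set u : Fin (d + 1) → W := j ∘ vF with hudef
  have hu : Function.Injective u := hj.comp hvF
  have h01 : u 0 ≠ u 1 := fun h => hzo (hu h)
  -- the retractions
  set r : W → W := fun w => if ∃ v, j v = w then w else u 0 with hrdef
  set r' : W → W := fun w => if ∃ v', j' v' = w then w else u 1 with hr'def
  have hPu : ∀ i, ∃ v, j v = u i := fun i => ⟨vF i, rfl⟩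
  have hQu : ∀ i, ∃ v', j' v' = u i := fun i => ⟨vF' (ρ i), (hglue i).symm⟩
  have hPQ : ∀ w, (∃ v, j v = w) → (∃ v', j' v' = w) → ∃ i, w = u i := by
    rintro w ⟨v, rfl⟩ ⟨v', hv'⟩
    obtain ⟨i, rfl⟩ := hmeet v v' hv'.symm
    exact ⟨i, rfl⟩
  have hrpos : ∀ w, (∃ v, j v = w) → r w = w := fun w h => if_pos h
  have hrneg : ∀ w, ¬ (∃ v, j v = w) → r w = u 0 := fun w h => if_neg h
  have hr'pos : ∀ w, (∃ v', j' v' = w) → r' w = w := fun w h => if_pos h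
  have hr'neg : ∀ w, ¬ (∃ v', j' v' = w) → r' w = u 1 := fun w h => if_neg h
  have hrP : ∀ w, ∃ v, j v = r w := by
    intro w
    by_cases h : ∃ v, j v = w
    · rw [hrpos w h]; exact h
    · rw [hrneg w h]; exact hPu 0
  have hr'Q : ∀ w, ∃ v', j' v' = r' w := by
    intro w
    by_cases h : ∃ v', j' v' = w
    · rw [hr'pos w h]; exact h
    · rw [hr'neg w h]; exact hQu 1
  have hrj : r ∘ j = j := funext (fun v => hrpos (j v) ⟨v, rfl⟩)
  have hr'j' : r' ∘ j' = j' := funext (fun v' => hr'pos (j' v') ⟨v', rfl⟩)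
  have hrj'C : ∀ v', ∃ i, (r ∘ j') v' = u i := by
    intro v'
    by_cases h : ∃ v, j v = j' v'
    · obtain ⟨i, hi⟩ := hPQ (j' v') h ⟨v', rfl⟩
      exact ⟨i, by rw [Function.comp_apply, hrpos _ h, hi]⟩
    · exact ⟨0, by rw [Function.comp_apply, hrneg _ h]⟩
  have hr'jC : ∀ v, ∃ i, (r' ∘ j) v = u i := by
    intro v
    by_cases h : ∃ v', j' v' = j v
    · obtain ⟨i, hi⟩ := hPQ (j v) ⟨v, rfl⟩ h
      exact ⟨i, by rw [Function.comp_apply, hr'pos _ h, hi]⟩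
    · exact ⟨1, by rw [Function.comp_apply, hr'neg _ h]⟩
  -- decomposition of the connected sum chain
  have hL : ∀ f, L f = pushChain j K f + pushChain j' K' f := by
    intro f
    rw [hLdef]
    unfold connSum
    have hsplit : (fun g : Fin (d + 1) → V ⊕ V' =>
        pushChain Sum.inl K g + pushChain Sum.inr K' g
          - pushChain Sum.inl (simplexChain vF) g - pushChain Sum.inr (simplexChain vF') g)
        = (fun g : Fin (d + 1) → V ⊕ V' =>
        (fun g' => pushChain Sum.inl K g' + pushChain Sum.inr K' g') g
          - (fun g' => pushChain Sum.inl (simplexChain vF) g'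
              + pushChain Sum.inr (simplexChain vF') g') g) := by
      funext g; ring
    rw [hsplit, pushChain_sub', pushChain_add', pushChain_add']
    rw [pushChain_comp, pushChain_comp, pushChain_comp, pushChain_comp]
    rw [Sum.elim_comp_inl, Sum.elim_comp_inr]
    rw [pushChain_simplexChain, pushChain_simplexChain]
    have hjvF' : j' ∘ vF' = u ∘ ⇑ρ⁻¹ := by
      funext i
      show j' (vF' i) = u (ρ⁻¹ i)
      have h2 : u (ρ⁻¹ i) = j' (vF' (ρ (ρ⁻¹ i))) := hglue (ρ⁻¹ i)
      rw [h2]; simp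
    rw [hjvF']
    rw [simplexChain_comp_perm u ρ⁻¹ f]
    have hsign : (Equiv.Perm.sign ρ⁻¹ : ℤ) = -1 := by
      rw [Equiv.Perm.sign_inv, hρ]; rfl
    rw [hsign]
    simp only [← hudef, neg_one_zsmul]
    ring
  -- pushing a filling along r, r' gives fillings of the two sides
  have hfill_r : ∀ (α : (Fin (d + 2) → W) → ℤ), (∀ g, bdry α g = L g) →
      ∀ g, bdry (pushChain r α) g = pushChain j K g := by
    intro α hα g
    rw [pushChain_bdry]
    have hba : bdry α = L := funext hα
    rw [hba]
    have hLfun : L = (fun f => pushChain j K f + pushChain j' K' f) := funext hL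
    rw [hLfun, pushChain_add', pushChain_comp, pushChain_comp, hrj]
    rw [pushChain_eq_zero_of_small_range (r ∘ j') K' hK'.chain hK'.closed u hu
      (fun v' => (hrj'C v').imp (fun i hi => hi)) g]
    ring
  have hfill_r' : ∀ (α : (Fin (d + 2) → W) → ℤ), (∀ g, bdry α g = L g) →
      ∀ g, bdry (pushChain r' α) g = pushChain j' K' g := by
    intro α hα g
    rw [pushChain_bdry]
    have hba : bdry α = L := funext hα
    rw [hba]
    have hLfun : L = (fun f => pushChain j K f + pushChain j' K' f) := funext hL
    rw [hLfun, pushChain_add', pushChain_comp, pushChain_comp, hr'j']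
    rw [pushChain_eq_zero_of_small_range (r' ∘ j) K hK.chain hK.closed u hu
      (fun v => (hr'jC v).imp (fun i hi => hi)) g]
    ring
  -- no injective simplex survives both retractions
  have hX : ∀ t : Fin (d + 2) → W, Function.Injective t →
      ¬ (Function.Injective (r ∘ t) ∧ Function.Injective (r' ∘ t)) := by
    rintro t ht ⟨h1, h2⟩
    have hinj : Function.Injective (fun i => r' (r (t i))) := by
      intro a b hab
      simp only [] at hab
      by_cases hPa : ∃ v, j v = t a <;> by_cases hPb : ∃ v, j v = t b
      · rw [hrpos _ hPa, hrpos _ hPb] at hab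
        exact h2 hab
      · rw [hrpos _ hPa, hrneg _ hPb, hr'pos _ (hQu 0)] at hab
        by_cases hQa : ∃ v', j' v' = t a
        · rw [hr'pos _ hQa] at hab
          exact h1 (by
            show r (t a) = r (t b)
            rw [hrpos _ hPa, hrneg _ hPb, hab])
        · rw [hr'neg _ hQa] at hab
          exact absurd hab.symm h01
      · rw [hrneg _ hPa, hrpos _ hPb, hr'pos _ (hQu 0)] at hab
        by_cases hQb : ∃ v', j' v' = t b
        · rw [hr'pos _ hQb] at hab
          exact h1 (by
            show r (t a) = r (t b)
            rw [hrneg _ hPa, hrpos _ hPb, ← hab])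
        · rw [hr'neg _ hQb] at hab
          exact absurd hab h01
      · rw [hrneg _ hPa, hrneg _ hPb] at hab
        exact h1 (by
          show r (t a) = r (t b)
          rw [hrneg _ hPa, hrneg _ hPb])
    have hval : ∀ i, ∃ k, r' (r (t i)) = u k := by
      intro i
      by_cases hP : ∃ v, j v = t i
      · rw [hrpos _ hP]
        by_cases hQ : ∃ v', j' v' = t i
        · obtain ⟨k, hk⟩ := hPQ (t i) hP hQ
          exact ⟨k, by rw [hr'pos _ hQ, hk]⟩
        · exact ⟨1, hr'neg _ hQ⟩
      · rw [hrneg _ hP]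
        exact ⟨0, hr'pos _ (hQu 0)⟩
    choose k hk using hval
    have hkinj : Function.Injective k := by
      intro a b hab
      apply hinj
      show r' (r (t a)) = r' (r (t b))
      rw [hk a, hk b, hab]
    have hcard := Fintype.card_le_of_injective k hkinj
    simp only [Fintype.card_fin] at hcard
    omega
  -- attainment of the infimum
  set T : Set ℕ := {m | ∃ α : (Fin (d + 2) → W) → ℤ, IsAltChain (d + 1) α ∧
    (∀ g, bdry α g = L g) ∧ m = ∑ t : Fin (d + 2) → W, (α t).natAbs} with hTdef
  have hTne : T.Nonempty := by
    refine ⟨∑ t : Fin (d + 2) → W, ((coneChain (u 0) L) t).natAbs,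
      coneChain (u 0) L, coneChain_alt (u 0) hLalt, ?_, rfl⟩
    intro g
    exact bdry_coneChain (u 0) hLalt hLclosed g
  obtain ⟨α₀, hα₀alt, hα₀fill, hα₀N⟩ := Nat.sInf_mem hTne
  set n₀ := sInf T with hn₀def
  -- norms as natural numbers
  have hnorm : ∀ β : (Fin (d + 2) → W) → ℤ,
      normZ β = ((∑ t : Fin (d + 2) → W, (β t).natAbs : ℕ) : ℝ) / (Nat.factorial (d + 2) : ℝ) := by
    intro β
    unfold normZ
    congr 1
    rw [Nat.cast_sum]
    refine Finset.sum_congr rfl (fun t _ => ?_)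
    rw [Nat.cast_natAbs]
    exact Int.cast_abs.symm
  have hfact_pos : (0 : ℝ) < (Nat.factorial (d + 2) : ℝ) := by positivity
  have hSBdd : BddBelow { x : ℝ | ∃ α : (Fin (d + 2) → W) → ℤ,
      IsAltChain (d + 1) α ∧ (∀ g, bdry α g = L g) ∧ x = normZ α } := by
    refine ⟨0, ?_⟩
    rintro x ⟨β, -, -, rfl⟩
    rw [hnorm β]
    positivity
  have hVZ : VZ d L = (n₀ : ℝ) / (Nat.factorial (d + 2) : ℝ) := by
    unfold VZ
    apply le_antisymm
    · have hmem : ∃ α : (Fin (d + 2) → W) → ℤ, IsAltChain (d + 1) α ∧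
          (∀ g, bdry α g = L g) ∧ (n₀ : ℝ) / (Nat.factorial (d + 2) : ℝ) = normZ α :=
        ⟨α₀, hα₀alt, hα₀fill, by rw [hnorm α₀, ← hα₀N]⟩
      exact csInf_le hSBdd hmem
    · have hmem : ∃ α : (Fin (d + 2) → W) → ℤ, IsAltChain (d + 1) α ∧
          (∀ g, bdry α g = L g) ∧ normZ α₀ = normZ α := ⟨α₀, hα₀alt, hα₀fill, rfl⟩
      apply le_csInf ⟨normZ α₀, hmem⟩
      rintro x ⟨β, hβalt, hβfill, rfl⟩
      rw [hnorm β]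
      gcongr
      have hmemβ : (∑ t : Fin (d + 2) → W, (β t).natAbs) ∈ T := ⟨β, hβalt, hβfill, rfl⟩
      exact_mod_cast Nat.sInf_le hmemβ
  -- the split filling
  set γ : (Fin (d + 2) → W) → ℤ := fun t => pushChain r α₀ t + pushChain r' α₀ t with hγdef
  have hγalt : IsAltChain (d + 1) γ := altChain_add (pushChain_alt r hα₀alt) (pushChain_alt r' hα₀alt)
  have hγfill : ∀ g, bdry γ g = L g := by
    intro g
    rw [hγdef]
    rw [bdry_add' (pushChain r α₀) (pushChain r' α₀) g]
    rw [hfill_r α₀ hα₀fill g, hfill_r' α₀ hα₀fill g, hL g]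
  -- norm comparison, in ℤ
  have habs : (∑ t : Fin (d + 2) → W, |γ t|) ≤ ∑ t : Fin (d + 2) → W, |α₀ t| := by
    have h1 : (∑ t : Fin (d + 2) → W, |γ t|)
        ≤ (∑ t : Fin (d + 2) → W, |pushChain r α₀ t|)
          + ∑ t : Fin (d + 2) → W, |pushChain r' α₀ t| := by
      rw [← Finset.sum_add_distrib]
      exact Finset.sum_le_sum (fun t _ => abs_add_le _ _)
    refine le_trans h1 ?_
    refine le_trans (add_le_add (pushChain_abs_le r hα₀alt) (pushChain_abs_le r' hα₀alt)) ?_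
    rw [← Finset.sum_add_distrib]
    refine Finset.sum_le_sum (fun g _ => ?_)
    by_cases hg0 : α₀ g = 0
    · simp [hg0]
    · have hginj : Function.Injective g := by
        by_contra hni
        exact hg0 (hα₀alt.eq_zero_of_not_inj hni)
      have hnot := hX g hginj
      by_cases hr1 : Function.Injective (r ∘ g) <;>
        by_cases hr2 : Function.Injective (r' ∘ g)
      · exact absurd ⟨hr1, hr2⟩ hnot
      · simp [hr1, hr2]
      · simp [hr1, hr2]
      · simp [hr1, hr2, abs_nonneg]
  have hcastsum : ∀ β : (Fin (d + 2) → W) → ℤ,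
      (∑ f : Fin (d + 2) → W, |((β f : ℤ) : ℝ)|)
        = ((∑ t : Fin (d + 2) → W, |β t| : ℤ) : ℝ) := by
    intro β
    rw [Int.cast_sum]
    exact Finset.sum_congr rfl (fun t _ => Int.cast_abs.symm)
  have hγnorm : normZ γ ≤ normZ α₀ := by
    unfold normZ
    rw [hcastsum γ, hcastsum α₀]
    gcongr
    all_goals exact_mod_cast habs
  have hα₀norm : normZ α₀ = VZ d L := by
    rw [hVZ, hnorm α₀, ← hα₀N]
  -- γ is optimal
  have hγVZ : normZ γ = VZ d L := by
    apply le_antisymm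
    · rw [← hα₀norm]; exact hγnorm
    · unfold VZ
      have hmem : ∃ α : (Fin (d + 2) → W) → ℤ, IsAltChain (d + 1) α ∧
          (∀ g, bdry α g = L g) ∧ normZ γ = normZ α := ⟨γ, hγalt, hγfill, rfl⟩
      exact csInf_le hSBdd hmem
  refine ⟨γ, hγalt, hγfill, hγVZ, ?_⟩
  -- split support
  intro t hne
  by_cases hr0 : pushChain r α₀ t = 0
  · right
    have hr'0 : pushChain r' α₀ t ≠ 0 := by
      intro h
      apply hne
      rw [hγdef]
      simp only []
      rw [hr0, h, add_zero]
    obtain ⟨g, hg⟩ : ∃ g : Fin (d + 2) → W, (if r' ∘ g = t then α₀ g else 0) ≠ 0 := by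
      by_contra hno
      push_neg at hno
      exact hr'0 (Finset.sum_eq_zero (fun g _ => hno g))
    have hgt : r' ∘ g = t := by
      by_contra hc
      simp [hc] at hg
    intro i
    obtain ⟨v', hv'⟩ := hr'Q (g i)
    exact ⟨v', by rw [← congrFun hgt i]; exact hv'.symm⟩
  · left
    obtain ⟨g, hg⟩ : ∃ g : Fin (d + 2) → W, (if r ∘ g = t then α₀ g else 0) ≠ 0 := by
      by_contra hno
      push_neg at hno
      exact hr0 (Finset.sum_eq_zero (fun g _ => hno g))
    have hgt : r ∘ g = t := by
      by_contra hc
      simp [hc] at hg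
    intro i
    obtain ⟨v, hv⟩ := hrP (g i)
    exact ⟨v, by rw [← congrFun hgt i]; exact hv.symm⟩
end

section
/- (Additivity of the integrality gap) Let K and K' be admissible d-complexes on disjoint finite vertex sets. Then V_ℤ(K ⊔ K') − V_ℚ(K ⊔ K') = (V_ℤ(K) − V_ℚ(K)) + (V_ℤ(K') − V_ℚ(K')), and likewise, if K # K' is a connected sum of K and K' along a facet of each, V_ℤ(K # K') − V_ℚ(K # K') = (V_ℤ(K) − V_ℚ(K)) + (V_ℤ(K') − V_ℚ(K')). -/
set_option maxHeartbeats 2000000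


/- ============================ auxiliary library ============================ -/

namespace SF

open Equiv Finset Function

variable {V W U V₁ V₂ : Type*} {R S : Type*} [CommRing R] [CommRing S] {n d : ℕ}

/- ---------- basic chain lemmas ---------- -/

lemma alt_eq_zero_of_not_injective {c : (Fin (n+1) → V) → R} (hc : IsAltChain n c)
    (h2 : ∀ x : R, x + x = 0 → x = 0) {f : Fin (n+1) → V}
    (hf : ¬ Function.Injective f) : c f = 0 := by
  obtain ⟨a, b, hab, hne⟩ := Function.not_injective_iff.mp hf
  have hswap : f ∘ (Equiv.swap a b) = f := by
    funext x
    by_cases hxa : x = a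
    · simp [hxa, Equiv.swap_apply_left, hab]
    · by_cases hxb : x = b
      · simp [hxb, Equiv.swap_apply_right, hab]
      · simp [Function.comp, Equiv.swap_apply_of_ne_of_ne hxa hxb]
  have := hc (Equiv.swap a b) f
  rw [hswap, Equiv.Perm.sign_swap hne] at this
  apply h2
  have : c f = -c f := by simpa using this
  linear_combination this

lemma alt_intCast {c : (Fin (n+1) → V) → ℤ} (hc : IsAltChain n c) :
    IsAltChain n (fun f => ((c f : ℤ) : R)) := by
  intro σ f
  simp only [hc σ f]
  push_cast
  rw [zsmul_eq_mul, zsmul_eq_mul]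
  push_cast
  ring

lemma bdry_intCast [Fintype V] (c : (Fin (n+1) → V) → ℤ) (g : Fin n → V) :
    bdry (fun f => ((c f : ℤ) : R)) g = ((bdry c g : ℤ) : R) := by
  simp [bdry]

lemma alt_add {c c' : (Fin (n+1) → V) → R} (hc : IsAltChain n c) (hc' : IsAltChain n c') :
    IsAltChain n (fun f => c f + c' f) := by
  intro σ f; simp only [hc σ f, hc' σ f, smul_add]

lemma bdry_add [Fintype V] (c c' : (Fin (n+1) → V) → R) (g : Fin n → V) :
    bdry (fun f => c f + c' f) g = bdry c g + bdry c' g := by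
  simp [bdry, Finset.sum_add_distrib]

/- ---------- pushforward lemmas ---------- -/

lemma comp_eq_cons_iff {q : V → W} {h : Fin (n+1) → V} {w : W} {g : Fin n → W} :
    q ∘ h = Fin.cons w g ↔ q (h 0) = w ∧ q ∘ (fun j => h (Fin.succ j)) = g := by
  constructor
  · intro e
    refine ⟨by simpa using congrFun e 0, funext fun j => by simpa using congrFun e j.succ⟩
  · rintro ⟨e0, es⟩
    funext i
    refine Fin.cases ?_ (fun j => ?_) i
    · simpa using e0
    · simpa using congrFun es j

lemma push_bdry [Fintype V] [Fintype W] [DecidableEq W] (q : V → W)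
    (c : (Fin (n+1) → V) → R) (g : Fin n → W) :
    bdry (pushChain q c) g = pushChain q (bdry c) g := by
  classical
  unfold bdry pushChain
  rw [Finset.sum_comm]
  have lhs : ∀ h : Fin (n+1) → V,
      (∑ w : W, if q ∘ h = Fin.cons w g then c h else 0)
        = if q ∘ (fun j => h (Fin.succ j)) = g then c h else 0 := by
    intro h
    have : ∀ w : W, (if q ∘ h = Fin.cons w g then c h else 0)
        = if q (h 0) = w then (if q ∘ (fun j => h (Fin.succ j)) = g then c h else 0) else 0 := by
      intro w
      rw [← ite_and]
      exact if_congr comp_eq_cons_iff rfl rfl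
    simp_rw [this]
    rw [Finset.sum_ite_eq (Finset.univ) (q (h 0))]
    simp
  simp_rw [lhs]
  have rhs : ∀ g' : Fin n → V, (if q ∘ g' = g then (∑ v : V, c (Fin.cons v g')) else 0)
      = ∑ v : V, if q ∘ g' = g then c (Fin.cons v g') else 0 := by
    intro g'; split_ifs <;> simp
  simp_rw [rhs]
  rw [← Finset.sum_comm]
  rw [← Equiv.sum_comp (Fin.consEquiv (fun _ : Fin (n+1) => V))
      (fun h => if (q ∘ fun j => h (Fin.succ j)) = g then c h else 0), Fintype.sum_prod_type]
  refine Finset.sum_congr rfl fun v _ => Finset.sum_congr rfl fun g' _ => ?_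
  simp [Fin.consEquiv]

lemma push_comp [Fintype V] [Fintype W] [DecidableEq W] [DecidableEq U]
    (u : W → U) (q : V → W) (c : (Fin n → V) → R) (f : Fin n → U) :
    pushChain u (pushChain q c) f = pushChain (u ∘ q) c f := by
  unfold pushChain
  have step : ∀ g : Fin n → W, (if u ∘ g = f then (∑ h : Fin n → V, if q ∘ h = g then c h else 0) else 0)
      = ∑ h : Fin n → V, if q ∘ h = g then (if u ∘ g = f then c h else 0) else 0 := by
    intro g; split_ifs with h <;> simp
  simp_rw [step]
  rw [Finset.sum_comm]
  refine Finset.sum_congr rfl fun h _ => ?_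
  have : ∀ g : Fin n → W, (if q ∘ h = g then (if u ∘ g = f then c h else 0) else 0)
      = if q ∘ h = g then (if u ∘ (q ∘ h) = f then c h else 0) else 0 := by
    intro g; by_cases hg : q ∘ h = g
    · subst hg; rfl
    · simp [hg]
  simp_rw [this]
  rw [Finset.sum_ite_eq Finset.univ (q ∘ h) (fun _ => if u ∘ (q ∘ h) = f then c h else 0)]
  simp [Function.comp_assoc]

lemma push_id [Fintype V] [DecidableEq V] (c : (Fin n → V) → R) (f : Fin n → V) :
    pushChain id c f = c f := by
  unfold pushChain
  simp only [Function.id_comp]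
  rw [Finset.sum_ite_eq' Finset.univ f c]
  simp

lemma push_alt [Fintype V] [DecidableEq W] (q : V → W) {c : (Fin (n+1) → V) → R}
    (hc : IsAltChain n c) : IsAltChain n (pushChain q c) := by
  intro σ f
  unfold pushChain
  rw [Finset.smul_sum]
  rw [← Equiv.sum_comp (Equiv.arrowCongr σ.symm (Equiv.refl V))
      (fun g => if q ∘ g = f ∘ σ then c g else 0)]
  refine Finset.sum_congr rfl fun g _ => ?_
  have h1 : (Equiv.arrowCongr σ.symm (Equiv.refl V)) g = g ∘ σ := rfl
  rw [h1]
  have h2 : (q ∘ (g ∘ σ) = f ∘ σ) ↔ (q ∘ g = f) := by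
    constructor
    · intro e; funext x; simpa using congrFun e (σ.symm x)
    · intro e; funext x; exact congrFun e (σ x)
  rw [if_congr h2 rfl rfl, hc σ g]
  split_ifs <;> simp

lemma push_add [Fintype V] [DecidableEq W] (q : V → W) (c c' : (Fin n → V) → R)
    (f : Fin n → W) :
    pushChain q (fun g => c g + c' g) f = pushChain q c f + pushChain q c' f := by
  unfold pushChain
  rw [← Finset.sum_add_distrib]
  exact Finset.sum_congr rfl fun g _ => by split_ifs <;> simp

lemma push_sub [Fintype V] [DecidableEq W] (q : V → W) (c c' : (Fin n → V) → R)
    (f : Fin n → W) :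
    pushChain q (fun g => c g - c' g) f = pushChain q c f - pushChain q c' f := by
  unfold pushChain
  rw [← Finset.sum_sub_distrib]
  exact Finset.sum_congr rfl fun g _ => by split_ifs <;> simp

lemma push_intCast [Fintype V] [DecidableEq W] (q : V → W) (c : (Fin n → V) → ℤ)
    (f : Fin n → W) :
    pushChain q (fun g => ((c g : ℤ) : R)) f = ((pushChain q c f : ℤ) : R) := by
  unfold pushChain
  push_cast
  exact Finset.sum_congr rfl fun g _ => by split_ifs <;> simp

lemma push_closed [Fintype V] [Fintype W] [DecidableEq W] (q : V → W)
    {c : (Fin (n+1) → V) → R} (hc : ∀ g, bdry c g = 0) (g : Fin n → W) :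
    bdry (pushChain q c) g = 0 := by
  rw [push_bdry]
  unfold pushChain
  exact Finset.sum_eq_zero fun g' _ => by rw [hc g']; simp

lemma push_simplexChain [Fintype V] [DecidableEq V] [DecidableEq W] (u : V → W)
    (s : Fin (n+1) → V) (f : Fin (n+1) → W) :
    pushChain u (simplexChain s) f = simplexChain (u ∘ s) f := by
  unfold pushChain simplexChain
  have step : ∀ g : Fin (n+1) → V, (if u ∘ g = f then (∑ σ : Equiv.Perm (Fin (n+1)), if g = s ∘ σ then ((Equiv.Perm.sign σ : ℤ)) else 0) else 0)
      = ∑ σ : Equiv.Perm (Fin (n+1)), if u ∘ g = f then (if g = s ∘ σ then ((Equiv.Perm.sign σ : ℤ)) else 0) else 0 := by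
    intro g; split_ifs <;> simp
  simp_rw [step]
  rw [Finset.sum_comm]
  refine Finset.sum_congr rfl fun σ _ => ?_
  have : ∀ g : Fin (n+1) → V, (if u ∘ g = f then (if g = s ∘ σ then ((Equiv.Perm.sign σ : ℤ)) else 0) else 0)
      = if g = s ∘ σ then (if u ∘ (s ∘ σ) = f then ((Equiv.Perm.sign σ : ℤ)) else 0) else 0 := by
    intro g
    by_cases hg : g = s ∘ σ
    · subst hg; rw [if_pos rfl, if_pos rfl]
    · simp [hg]
  calc (∑ g : Fin (n+1) → V, if u ∘ g = f then (if g = s ∘ σ then ((Equiv.Perm.sign σ : ℤ)) else 0) else 0)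
      = ∑ g : Fin (n+1) → V, if g = s ∘ σ then (if u ∘ (s ∘ σ) = f then ((Equiv.Perm.sign σ : ℤ)) else 0) else 0 :=
        Finset.sum_congr rfl fun g _ => this g
    _ = if u ∘ (s ∘ σ) = f then ((Equiv.Perm.sign σ : ℤ)) else 0 := by
        rw [Finset.sum_ite_eq' Finset.univ (s ∘ σ)]; simp
    _ = if f = u ∘ s ∘ σ then ((Equiv.Perm.sign σ : ℤ)) else 0 := if_congr eq_comm rfl rfl

lemma simplexChain_comp_perm [DecidableEq V] (s : Fin (n+1) → V) (τ : Equiv.Perm (Fin (n+1)))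
    (f : Fin (n+1) → V) :
    simplexChain (s ∘ τ) f = (Equiv.Perm.sign τ : ℤ) * simplexChain s f := by
  unfold simplexChain
  rw [Finset.mul_sum]
  calc (∑ σ : Equiv.Perm (Fin (n+1)), if f = (s ∘ τ) ∘ σ then ((Equiv.Perm.sign σ : ℤ)) else 0)
      = ∑ σ : Equiv.Perm (Fin (n+1)), (Equiv.Perm.sign τ : ℤ) *
          (if f = s ∘ ((Equiv.mulLeft τ) σ) then ((Equiv.Perm.sign ((Equiv.mulLeft τ) σ) : ℤ)) else 0) := by
        refine Finset.sum_congr rfl fun σ _ => ?_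
        have h1 : (Equiv.mulLeft τ) σ = τ * σ := rfl
        have h2 : s ∘ ⇑(τ * σ) = (s ∘ ⇑τ) ∘ ⇑σ := by
          rw [Equiv.Perm.coe_mul, Function.comp_assoc]
        rw [h1, h2]
        split_ifs with h
        · have : ((Equiv.Perm.sign (τ * σ) : ℤ)) = (Equiv.Perm.sign τ : ℤ) * (Equiv.Perm.sign σ : ℤ) := by
            rw [map_mul]; push_cast; ring
          rw [this, ← mul_assoc]
          rcases Int.units_eq_one_or (Equiv.Perm.sign τ) with h' | h' <;> simp [h']
        · simp
    _ = ∑ ρ : Equiv.Perm (Fin (n+1)), (Equiv.Perm.sign τ : ℤ) *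
          (if f = s ∘ ρ then ((Equiv.Perm.sign ρ : ℤ)) else 0) :=
        Equiv.sum_comp (Equiv.mulLeft τ) (fun ρ => (Equiv.Perm.sign τ : ℤ) *
          (if f = s ∘ ρ then ((Equiv.Perm.sign ρ : ℤ)) else 0))

end SF


namespace SF
open Equiv Finset Function
variable {V W U V₁ V₂ : Type*} {R S : Type*} [CommRing R] [CommRing S] {n d : ℕ}

lemma succAbove_conj {n : ℕ} (σ : Equiv.Perm (Fin (n+1))) (i : Fin (n+1)) :
    ∃ τ : Equiv.Perm (Fin n), (∀ j, σ (i.succAbove j) = (σ i).succAbove (τ j)) ∧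
      (Equiv.Perm.sign τ : ℤ) = (-1 : ℤ)^((i : ℕ) + ((σ i : Fin (n+1)) : ℕ)) * (Equiv.Perm.sign σ : ℤ) := by
  set π : Equiv.Perm (Fin (n+1)) := (Fin.cycleRange (σ i)) * σ * (Fin.cycleRange i)⁻¹ with hπdef
  have hπ0 : π 0 = 0 := by
    have h1 : ((Fin.cycleRange i)⁻¹ : Equiv.Perm (Fin (n+1))) (0 : Fin (n+1))
        = (Fin.cycleRange i).symm 0 := rfl
    simp only [hπdef, Equiv.Perm.mul_apply, h1, Fin.cycleRange_symm_zero, Fin.cycleRange_self]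
  set τ : Equiv.Perm (Fin n) := (Equiv.Perm.decomposeFin π).2 with hτdef
  have hsymm : Equiv.Perm.decomposeFin.symm ((Equiv.Perm.decomposeFin π).1, τ) = π := by
    rw [hτdef]
    exact Equiv.symm_apply_apply Equiv.Perm.decomposeFin π
  have hp : (Equiv.Perm.decomposeFin π).1 = 0 := by
    have := Equiv.Perm.decomposeFin_symm_apply_zero (Equiv.Perm.decomposeFin π).1 τ
    rw [hsymm] at this
    rw [← this, hπ0]
  rw [hp] at hsymm
  have hsucc : ∀ j : Fin n, π j.succ = (τ j).succ := by
    intro j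
    have := Equiv.Perm.decomposeFin_symm_apply_succ τ (0 : Fin (n+1)) j
    rw [hsymm] at this
    simpa using this
  refine ⟨τ, ?_, ?_⟩
  · intro j
    have step : (σ i).succAbove (τ j) = (Fin.cycleRange (σ i)).symm ((τ j).succ) := by
      rw [Fin.cycleRange_symm_succ]
    rw [step, ← hsucc j]
    have : π j.succ = (Fin.cycleRange (σ i)) (σ ((Fin.cycleRange i).symm j.succ)) := rfl
    rw [this, Equiv.symm_apply_apply, Fin.cycleRange_symm_succ]
  · have hsign : Equiv.Perm.sign π = Equiv.Perm.sign τ := by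
      rw [← hsymm, Equiv.Perm.decomposeFin.symm_sign]
      simp
    have hsign2 : Equiv.Perm.sign π
        = (-1 : ℤˣ)^((σ i : Fin (n+1)) : ℕ) * Equiv.Perm.sign σ * (-1 : ℤˣ)^(i : ℕ) := by
      rw [hπdef]
      rw [map_mul, map_mul, Equiv.Perm.sign_inv]
      rw [Fin.sign_cycleRange, Fin.sign_cycleRange]
    have := hsign.symm.trans hsign2
    rw [this]
    push_cast
    ring


/-- The cone over a closed chain. -/
def coneChain [DecidableEq V] (v₀ : V) (c : (Fin (d+1) → V) → R) :
    (Fin (d+2) → V) → R :=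
  fun f => ∑ i : Fin (d+2), (-1 : R)^(i : ℕ) * (if f i = v₀ then c (f ∘ i.succAbove) else 0)

lemma cone_alt [DecidableEq V] (v₀ : V) {c : (Fin (d+1) → V) → R}
    (hc : IsAltChain d c) : IsAltChain (d+1) (coneChain v₀ c) := by
  intro σ f
  unfold coneChain
  rw [zsmul_eq_mul, Finset.mul_sum]
  have key : ∀ i : Fin (d+2),
      (-1 : R)^(i : ℕ) * (if (f ∘ σ) i = v₀ then c ((f ∘ σ) ∘ i.succAbove) else 0)
        = ((Equiv.Perm.sign σ : ℤ) : R) *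
          ((-1 : R)^((σ i : Fin (d+2)) : ℕ) * (if f (σ i) = v₀ then c (f ∘ (σ i).succAbove) else 0)) := by
    intro i
    obtain ⟨τ, hτ1, hτ2⟩ := succAbove_conj σ i
    have hcomp : (f ∘ σ) ∘ i.succAbove = (f ∘ (σ i).succAbove) ∘ τ := by
      funext j; simp [Function.comp, hτ1 j]
    rw [hcomp]
    have halt := hc τ (f ∘ (σ i).succAbove)
    rw [halt, zsmul_eq_mul]
    have hone : (-1 : R)^(i : ℕ) * (-1 : R)^(i : ℕ) = 1 := by
      rw [← mul_pow]; norm_num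
    have hcond : (f ∘ σ) i = v₀ ↔ f (σ i) = v₀ := Iff.rfl
    rw [if_congr hcond rfl rfl]
    split_ifs with hP
    · have hcast : ((Equiv.Perm.sign τ : ℤ) : R)
          = (-1 : R)^((i : ℕ) + ((σ i : Fin (d+2)) : ℕ)) * ((Equiv.Perm.sign σ : ℤ) : R) := by
        rw [hτ2]; push_cast; ring
      rw [hcast]
      linear_combination ((-1 : R)^((σ i : Fin (d+2)) : ℕ) * ((Equiv.Perm.sign σ : ℤ) : R)
        * c (f ∘ (σ i).succAbove)) * hone
    · ring
  rw [Finset.sum_congr rfl fun i _ => key i]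
  exact Equiv.sum_comp σ (fun k => ((Equiv.Perm.sign σ : ℤ) : R) *
    ((-1 : R)^((k : Fin (d+2)) : ℕ) * (if f k = v₀ then c (f ∘ k.succAbove) else 0)))

lemma cone_bdry [Fintype V] [DecidableEq V] (v₀ : V) (c : (Fin (d+1) → V) → R)
    (hclosed : ∀ g, bdry c g = 0) (g : Fin (d+1) → V) :
    bdry (coneChain v₀ c) g = c g := by
  unfold bdry coneChain
  have expand : ∀ v : V,
      (∑ i : Fin (d+2), (-1 : R)^(i : ℕ) *
        (if (Fin.cons v g : Fin (d+2) → V) i = v₀ then c ((Fin.cons v g : Fin (d+2) → V) ∘ i.succAbove) else 0))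
      = (if v = v₀ then c g else 0)
        + ∑ j : Fin (d+1), (-1 : R)^((j : ℕ) + 1) *
            (if g j = v₀ then c (Fin.cons v (g ∘ j.succAbove)) else 0) := by
    intro v
    rw [Fin.sum_univ_succ]
    congr 1
    · have h0 : (Fin.cons v g : Fin (d+2) → V) ∘ Fin.succ = g := by
        funext k; simp
      simp [Fin.succAbove_zero, h0]
    · refine Finset.sum_congr rfl fun j _ => ?_
      have hcond : (Fin.cons v g : Fin (d+2) → V) j.succ = g j := by simp
      have hcomp : (Fin.cons v g : Fin (d+2) → V) ∘ (j.succ).succAbove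
          = Fin.cons v (g ∘ j.succAbove) := by
        funext k
        refine Fin.cases ?_ (fun m => ?_) k
        · simp
        · simp [Fin.succ_succAbove_succ]
      rw [hcond, hcomp]
      norm_num
  simp_rw [expand]
  rw [Finset.sum_add_distrib]
  have h1 : (∑ v : V, if v = v₀ then c g else 0) = c g := by
    rw [Finset.sum_ite_eq' Finset.univ v₀ (fun _ => c g)]
    simp
  have h2 : (∑ v : V, ∑ j : Fin (d+1), (-1 : R)^((j : ℕ) + 1) *
      (if g j = v₀ then c (Fin.cons v (g ∘ j.succAbove)) else 0)) = 0 := by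
    rw [Finset.sum_comm]
    refine Finset.sum_eq_zero fun j _ => ?_
    have : (∑ v : V, (-1 : R)^((j : ℕ) + 1) *
        (if g j = v₀ then c (Fin.cons v (g ∘ j.succAbove)) else 0))
        = (-1 : R)^((j : ℕ) + 1) * (if g j = v₀ then (∑ v : V, c (Fin.cons v (g ∘ j.succAbove))) else 0) := by
      by_cases hP : g j = v₀
      · simp only [if_pos hP, Finset.mul_sum]
      · simp only [if_neg hP, mul_zero, Finset.sum_const_zero]
    rw [this]
    have : (∑ v : V, c (Fin.cons v (g ∘ j.succAbove))) = 0 := hclosed (g ∘ j.succAbove)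
    rw [this]
    split_ifs <;> simp
  rw [h1, h2, add_zero]



lemma alt_closed_small_eq_zero [Fintype V] [DecidableEq V] {c : (Fin (d+1) → V) → R}
    (halt : IsAltChain d c) (hclosed : ∀ g, bdry c g = 0)
    (h2 : ∀ x : R, x + x = 0 → x = 0)
    (S : Finset V) (hS : S.card ≤ d + 1) (hsupp : ∀ f, c f ≠ 0 → ∀ i, f i ∈ S)
    (f : Fin (d+1) → V) : c f = 0 := by
  by_contra hf
  have hinj : Function.Injective f := by
    by_contra h
    exact hf (alt_eq_zero_of_not_injective halt h2 h)
  have himage : Finset.image f Finset.univ = S := by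
    apply Finset.eq_of_subset_of_card_le
    · intro v hv
      obtain ⟨i, _, rfl⟩ := Finset.mem_image.mp hv
      exact hsupp f hf i
    · rw [Finset.card_image_of_injective _ hinj]
      simpa using hS
  have hb := hclosed (fun j => f (Fin.succ j))
  unfold bdry at hb
  rw [Finset.sum_eq_single (f 0)] at hb
  · rw [show (Fin.cons (f 0) (fun j => f (Fin.succ j)) : Fin (d+1) → V) = f from
      Fin.cons_self_tail f] at hb
    exact hf hb
  · intro v _ hv
    by_contra hne
    set t : Fin (d+1) → V := Fin.cons v (fun j => f (Fin.succ j)) with ht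
    have htinj : Function.Injective t := by
      by_contra h
      exact hne (alt_eq_zero_of_not_injective halt h2 h)
    have hvS : v ∈ S := by
      have := hsupp t hne 0
      simpa [ht] using this
    rw [← himage] at hvS
    obtain ⟨i, _, hiv⟩ := Finset.mem_image.mp hvS
    rcases Fin.eq_zero_or_eq_succ i with hi0 | ⟨j, hj⟩
    · exact hv (by rw [← hiv, hi0])
    · have : t (Fin.succ j) = t 0 := by
        simp only [ht, Fin.cons_succ, Fin.cons_zero]
        rw [← hiv, hj]
      have := htinj this
      exact absurd this (Fin.succ_ne_zero j)
  · intro h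
    exact absurd (Finset.mem_univ (f 0)) h

/-- Pushforward of an alt closed chain under a map with small range is zero. -/
lemma push_small_eq_zero [Fintype V] [Fintype W] [DecidableEq W]
    {c : (Fin (d+1) → V) → R} (halt : IsAltChain d c) (hclosed : ∀ g, bdry c g = 0)
    (h2 : ∀ x : R, x + x = 0 → x = 0) (u : V → W) (S : Finset W) (hS : S.card ≤ d + 1)
    (hrange : ∀ v, u v ∈ S)
    (haltp : IsAltChain d (pushChain u c)) (hclosedp : ∀ g, bdry (pushChain u c) g = 0)
    (f : Fin (d+1) → W) : pushChain u c f = 0 := by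
  classical
  refine alt_closed_small_eq_zero haltp hclosedp h2 S hS ?_ f
  intro f' hf' i
  -- f' in support of pushChain: some g with u ∘ g = f'
  by_contra hnot
  apply hf'
  unfold pushChain
  refine Finset.sum_eq_zero fun g _ => ?_
  have : ¬ (u ∘ g = f') := by
    intro he
    exact hnot (he ▸ hrange (g i))
  simp [this]



lemma sum_abs_push_le [Fintype V] [Fintype W] [DecidableEq W] (φ : R →+* ℝ)
    (q : V → W) (c : (Fin n → V) → R) :
    ∑ f : Fin n → W, |φ (pushChain q c f)| ≤ ∑ g : Fin n → V, |φ (c g)| := by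
  unfold pushChain
  have step : ∀ f : Fin n → W, |φ (∑ g : Fin n → V, if q ∘ g = f then c g else 0)|
      ≤ ∑ g : Fin n → V, (if q ∘ g = f then |φ (c g)| else 0) := by
    intro f
    rw [map_sum]
    refine (Finset.abs_sum_le_sum_abs _ _).trans_eq ?_
    refine Finset.sum_congr rfl fun g _ => ?_
    split_ifs <;> simp
  refine (Finset.sum_le_sum fun f _ => step f).trans_eq ?_
  rw [Finset.sum_comm]
  refine Finset.sum_congr rfl fun g _ => ?_
  rw [Finset.sum_ite_eq Finset.univ (q ∘ g) (fun _ => |φ (c g)|)]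
  simp

lemma sum_abs_push_inj [Fintype V] [Fintype W] [DecidableEq W] (φ : R →+* ℝ)
    {q : V → W} (hq : Function.Injective q) (c : (Fin n → V) → R) :
    ∑ f : Fin n → W, |φ (pushChain q c f)| = ∑ g : Fin n → V, |φ (c g)| := by
  unfold pushChain
  have hcomp_inj : ∀ g g' : Fin n → V, q ∘ g = q ∘ g' → g = g' := by
    intro g g' h
    funext i
    exact hq (congrFun h i)
  have step : ∀ f : Fin n → W, |φ (∑ g : Fin n → V, if q ∘ g = f then c g else 0)|
      = ∑ g : Fin n → V, (if q ∘ g = f then |φ (c g)| else 0) := by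
    intro f
    by_cases hex : ∃ g₀ : Fin n → V, q ∘ g₀ = f
    · obtain ⟨g₀, hg₀⟩ := hex
      rw [Finset.sum_eq_single g₀, Finset.sum_eq_single g₀]
      · rw [if_pos hg₀, if_pos hg₀]
      · intro g _ hne
        rw [if_neg (fun he => hne (hcomp_inj g g₀ (he.trans hg₀.symm)))]
      · simp
      · intro g _ hne
        rw [if_neg (fun he => hne (hcomp_inj g g₀ (he.trans hg₀.symm)))]
      · simp
    · rw [Finset.sum_eq_zero, Finset.sum_eq_zero]
      · simp
      · intro g _; rw [if_neg (fun he => hex ⟨g, he⟩)]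
      · intro g _; rw [if_neg (fun he => hex ⟨g, he⟩)]
  simp_rw [step]
  rw [Finset.sum_comm]
  refine Finset.sum_congr rfl fun g _ => ?_
  rw [Finset.sum_ite_eq Finset.univ (q ∘ g) (fun _ => |φ (c g)|)]
  simp

lemma sum_abs_push_restrict [Fintype V] [Fintype W] [DecidableEq W] (φ : R →+* ℝ)
    {c : (Fin (n+1) → V) → R} (h2 : ∀ x : R, x + x = 0 → x = 0) (t : V → W)
    (haltp : IsAltChain n (pushChain t c)) :
    (∑ f : Fin (n+1) → W, |φ (pushChain t c f)|)
      ≤ ∑ g : Fin (n+1) → V,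
          (if Function.Injective (t ∘ g) then |φ (c g)| else 0) := by
  classical
  have h1 : (∑ f : Fin (n+1) → W, |φ (pushChain t c f)|)
      = ∑ f ∈ Finset.univ.filter (fun f : Fin (n+1) → W => Function.Injective f),
          |φ (pushChain t c f)| := by
    symm
    apply Finset.sum_subset (Finset.filter_subset _ _)
    intro f _ hf
    have : ¬ Function.Injective f := by
      intro h; exact hf (Finset.mem_filter.mpr ⟨Finset.mem_univ f, h⟩)
    rw [alt_eq_zero_of_not_injective haltp h2 this]
    simp
  rw [h1]
  have h3 : ∀ f, |φ (pushChain t c f)|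
      ≤ ∑ g : Fin (n+1) → V, (if t ∘ g = f then |φ (c g)| else 0) := by
    intro f
    unfold pushChain
    rw [map_sum]
    refine (Finset.abs_sum_le_sum_abs _ _).trans_eq ?_
    refine Finset.sum_congr rfl fun g _ => ?_
    split_ifs <;> simp
  refine (Finset.sum_le_sum fun f _ => h3 f).trans_eq ?_
  rw [Finset.sum_comm]
  refine Finset.sum_congr rfl fun g _ => ?_
  rw [Finset.sum_ite_eq (Finset.univ.filter (fun f : Fin (n+1) → W => Function.Injective f))
      (t ∘ g) (fun _ => |φ (c g)|)]
  simp [Finset.mem_filter]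

lemma sum_abs_split [Fintype V] [Fintype V₁] [Fintype V₂] [DecidableEq V₁] [DecidableEq V₂]
    (φ : R →+* ℝ) {c : (Fin (n+1) → V) → R} (halt : IsAltChain n c)
    (h2 : ∀ x : R, x + x = 0 → x = 0) (u : V → V₁) (s : V → V₂)
    (hdisj : ∀ g : Fin (n+1) → V, c g ≠ 0 →
      ¬ (Function.Injective (u ∘ g) ∧ Function.Injective (s ∘ g))) :
    (∑ f : Fin (n+1) → V₁, |φ (pushChain u c f)|)
      + (∑ f : Fin (n+1) → V₂, |φ (pushChain s c f)|)
      ≤ ∑ g : Fin (n+1) → V, |φ (c g)| := by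
  classical
  refine (add_le_add (sum_abs_push_restrict φ h2 u (push_alt u halt))
    (sum_abs_push_restrict φ h2 s (push_alt s halt))).trans ?_
  rw [← Finset.sum_add_distrib]
  refine Finset.sum_le_sum fun g _ => ?_
  by_cases hg : c g = 0
  · simp [hg]
  · have hnd := hdisj g hg
    have habs : (0:ℝ) ≤ |φ (c g)| := abs_nonneg _
    split_ifs with h1' h2'
    · exact absurd ⟨h1', h2'⟩ hnd
    · simp
    · simp
    · simp [habs]


lemma sInf_add_sInf (S1 S2 S3 : Set ℝ) (h1 : S1.Nonempty) (h2 : S2.Nonempty) (h3 : S3.Nonempty)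
    (b1 : ∀ x ∈ S1, (0:ℝ) ≤ x) (b2 : ∀ x ∈ S2, (0:ℝ) ≤ x) (b3 : ∀ x ∈ S3, (0:ℝ) ≤ x)
    (hcomb : ∀ x ∈ S1, ∀ y ∈ S2, ∃ z ∈ S3, z ≤ x + y)
    (hsplit : ∀ z ∈ S3, ∃ x ∈ S1, ∃ y ∈ S2, x + y ≤ z) :
    sInf S3 = sInf S1 + sInf S2 := by
  have bb1 : BddBelow S1 := ⟨0, fun x hx => b1 x hx⟩
  have bb2 : BddBelow S2 := ⟨0, fun x hx => b2 x hx⟩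
  have bb3 : BddBelow S3 := ⟨0, fun x hx => b3 x hx⟩
  apply le_antisymm
  · refine le_of_forall_pos_le_add ?_
    intro ε hε
    obtain ⟨x, hx, hxlt⟩ := exists_lt_of_csInf_lt h1 (lt_add_of_pos_right (sInf S1) (half_pos hε))
    obtain ⟨y, hy, hylt⟩ := exists_lt_of_csInf_lt h2 (lt_add_of_pos_right (sInf S2) (half_pos hε))
    obtain ⟨z, hz, hzle⟩ := hcomb x hx y hy
    have := csInf_le bb3 hz
    linarith
  · refine le_csInf h3 ?_
    intro z hz
    obtain ⟨x, hx, y, hy, hxy⟩ := hsplit z hz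
    have := add_le_add (csInf_le bb1 hx) (csInf_le bb2 hy)
    linarith


lemma union_no_straddle (hd : 1 ≤ d) (v₀ : V) (v₀' : V') (g : Fin (d+2) → V ⊕ V')
    (hu : Function.Injective ((Sum.elim id (fun _ => v₀) : V ⊕ V' → V) ∘ g))
    (hs : Function.Injective ((Sum.elim (fun _ => v₀') id : V ⊕ V' → V') ∘ g)) : False := by
  classical
  set P : Finset (Fin (d+2)) := Finset.univ.filter (fun i => (g i).isRight) with hP
  set Q : Finset (Fin (d+2)) := Finset.univ.filter (fun i => (g i).isLeft) with hQ
  have hPcard : P.card ≤ 1 := by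
    refine Finset.card_le_one.mpr fun i hi k hk => ?_
    rw [hP, Finset.mem_filter] at hi hk
    obtain ⟨x, hx⟩ := Sum.isRight_iff.mp hi.2
    obtain ⟨y, hy⟩ := Sum.isRight_iff.mp hk.2
    apply hu
    simp [Function.comp, hx, hy]
  have hQcard : Q.card ≤ 1 := by
    refine Finset.card_le_one.mpr fun i hi k hk => ?_
    rw [hQ, Finset.mem_filter] at hi hk
    obtain ⟨x, hx⟩ := Sum.isLeft_iff.mp hi.2
    obtain ⟨y, hy⟩ := Sum.isLeft_iff.mp hk.2
    apply hs
    simp [Function.comp, hx, hy]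
  have hunion : P ∪ Q = Finset.univ := by
    refine Finset.eq_univ_of_forall fun i => ?_
    rcases hgi : g i with x | x
    · exact Finset.mem_union.mpr (Or.inr (by rw [hQ]; simp [hgi]))
    · exact Finset.mem_union.mpr (Or.inl (by rw [hP]; simp [hgi]))
  have h1 : (Finset.univ : Finset (Fin (d+2))).card ≤ P.card + Q.card := by
    rw [← hunion]; exact Finset.card_union_le P Q
  rw [Finset.card_univ, Fintype.card_fin] at h1
  omega

lemma conn_no_straddle (hd : 1 ≤ d)
    (vF : Fin (d + 1) → V) (vF' : Fin (d + 1) → V')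
    (j : V → W) (j' : V' → W) (hj : Function.Injective j) (hj' : Function.Injective j')
    (hmeet : ∀ (v : V) (v' : V'), j v = j' v' → ∃ i, v = vF i)
    (ρ : Equiv.Perm (Fin (d + 1)))
    (hglue : ∀ i, j (vF i) = j' (vF' (ρ i)))
    (i₁ : Fin (d+1)) (hi₁ : i₁ ≠ ρ 0)
    (r : W → V) (s : W → V')
    (hr : ∀ w, (∃ v, j v = w) → j (r w) = w)
    (hr' : ∀ w, ¬ (∃ v, j v = w) → r w = vF 0)
    (hs : ∀ w, (∃ v', j' v' = w) → j' (s w) = w)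
    (hs' : ∀ w, ¬ (∃ v', j' v' = w) → s w = vF' i₁)
    (g : Fin (d+2) → W)
    (hru : Function.Injective (r ∘ g)) (hrs : Function.Injective (s ∘ g)) : False := by
  classical
  have hginj : Function.Injective g := fun a b hab => hru (by simp [Function.comp, hab])
  set P : Finset (Fin (d+2)) := Finset.univ.filter (fun i => r (g i) = vF 0) with hPdef
  set Q : Finset (Fin (d+2)) := Finset.univ.filter (fun i => s (g i) = vF' i₁) with hQdef
  have hPcard : P.card ≤ 1 := by
    refine Finset.card_le_one.mpr fun i hi k hk => ?_
    rw [hPdef, Finset.mem_filter] at hi hk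
    exact hru (show r (g i) = r (g k) from hi.2.trans hk.2.symm)
  have hQcard : Q.card ≤ 1 := by
    refine Finset.card_le_one.mpr fun i hi k hk => ?_
    rw [hQdef, Finset.mem_filter] at hi hk
    exact hrs (show s (g i) = s (g k) from hi.2.trans hk.2.symm)
  set T : Finset (Fin (d+2)) := Finset.univ \ (P ∪ Q) with hTdef
  -- for i ∈ T, g i = j (vF k) with k ≠ 0, k ≠ ρ⁻¹ i₁
  have hkey : ∀ i ∈ T, ∃ k : Fin (d+1), g i = j (vF k) := by
    intro i hi
    rw [hTdef, Finset.mem_sdiff, Finset.mem_union, hPdef, hQdef] at hi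
    obtain ⟨-, hi2⟩ := hi
    push_neg at hi2
    obtain ⟨hiP, hiQ⟩ := hi2
    simp only [Finset.mem_filter, Finset.mem_univ, true_and] at hiP hiQ
    have hinj : ∃ v, j v = g i := by
      by_contra h
      exact hiP (hr' (g i) h)
    have hinj' : ∃ v', j' v' = g i := by
      by_contra h
      exact hiQ (hs' (g i) h)
    obtain ⟨v, hv⟩ := hinj
    obtain ⟨v', hv'⟩ := hinj'
    obtain ⟨k, hk⟩ := hmeet v v' (hv.trans hv'.symm)
    exact ⟨k, by rw [← hv, hk]⟩
  set κ : Fin (d+2) → Fin (d+1) :=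
    fun i => if h : ∃ k : Fin (d+1), g i = j (vF k) then h.choose else 0 with hκdef
  have hκspec : ∀ i ∈ T, g i = j (vF (κ i)) := by
    intro i hi
    have h := hkey i hi
    rw [hκdef]
    simp only [dif_pos h]
    exact h.choose_spec
  have hmaps : ∀ i ∈ T, κ i ∈ (Finset.univ \ ({0, ρ.symm i₁} : Finset (Fin (d+1)))) := by
    intro i hi
    have hspec := hκspec i hi
    have hi' := hi
    rw [hTdef, Finset.mem_sdiff, Finset.mem_union, hPdef, hQdef] at hi'
    obtain ⟨-, hi2⟩ := hi'
    push_neg at hi2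
    obtain ⟨hiP, hiQ⟩ := hi2
    simp only [Finset.mem_filter, Finset.mem_univ, true_and] at hiP hiQ
    rw [Finset.mem_sdiff]
    refine ⟨Finset.mem_univ _, ?_⟩
    intro hmem
    rcases Finset.mem_insert.mp hmem with h0 | h1
    · apply hiP
      rw [hspec, h0]
      exact hj (hr (j (vF 0)) ⟨vF 0, rfl⟩)
    · apply hiQ
      rw [Finset.mem_singleton] at h1
      have hgi : g i = j' (vF' i₁) := by
        rw [hspec, h1, hglue (ρ.symm i₁), Equiv.apply_symm_apply]
      rw [hgi]
      exact hj' (hs (j' (vF' i₁)) ⟨vF' i₁, rfl⟩)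
  have hinjOn : Set.InjOn κ T := by
    intro a ha b hb hab
    apply hginj
    rw [hκspec a ha, hκspec b hb, hab]
  have hcard := Finset.card_le_card_of_injOn κ hmaps hinjOn
  have hTcard : (d + 2) - (P ∪ Q).card ≤ T.card := by
    rw [hTdef, Finset.card_sdiff_of_subset (Finset.subset_univ _), Finset.card_univ, Fintype.card_fin]
  have hPQ : (P ∪ Q).card ≤ 2 := (Finset.card_union_le P Q).trans (by omega)
  have htarget : (Finset.univ \ ({0, ρ.symm i₁} : Finset (Fin (d+1)))).card = (d + 1) - 2 := by
    rw [Finset.card_sdiff_of_subset (Finset.subset_univ _), Finset.card_univ, Fintype.card_fin]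
    have hne : (0 : Fin (d+1)) ≠ ρ.symm i₁ := by
      intro h
      apply hi₁
      rw [← Equiv.apply_symm_apply ρ i₁, ← h]
    rw [Finset.card_pair hne]
  omega

end SF

namespace SF
open Equiv Finset Function
variable {V V' W : Type*} {R : Type*} [CommRing R] {n d : ℕ}

/-- generic norm via a coefficient embedding into `ℝ`. -/
noncomputable def normG (φ : R →+* ℝ) {V : Type*} [Fintype V] {n : ℕ}
    (c : (Fin (n + 1) → V) → R) : ℝ :=
  (∑ f : Fin (n + 1) → V, |φ (c f)|) / (Nat.factorial (n + 1) : ℝ)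

/-- generic set of filling norms. -/
def FSet (φ : R →+* ℝ) {V : Type*} [Fintype V] [DecidableEq V] (d : ℕ)
    (K : (Fin (d + 1) → V) → ℤ) : Set ℝ :=
  { x : ℝ | ∃ α : (Fin (d + 2) → V) → R,
    IsAltChain (d + 1) α ∧ (∀ g, bdry α g = ((K g : ℤ) : R)) ∧ x = normG φ α }

lemma h2_of_inj {φ : R →+* ℝ} (hφ : Function.Injective φ) :
    ∀ x : R, x + x = 0 → x = 0 := by
  intro x hx
  apply hφ
  have : φ x + φ x = 0 := by rw [← map_add, hx, map_zero]
  rw [map_zero]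
  linarith [this]

lemma h2Z : ∀ x : ℤ, x + x = 0 → x = 0 := fun x hx => by omega

lemma normG_nonneg (φ : R →+* ℝ) {V : Type*} [Fintype V] (c : (Fin (n + 1) → V) → R) :
    0 ≤ normG φ c := by
  unfold normG
  apply div_nonneg
  · exact Finset.sum_nonneg fun f _ => abs_nonneg _
  · positivity

lemma FSet_nonneg (φ : R →+* ℝ) {V : Type*} [Fintype V] [DecidableEq V]
    (K : (Fin (d + 1) → V) → ℤ) : ∀ x ∈ FSet φ d K, (0:ℝ) ≤ x := by
  rintro x ⟨α, -, -, rfl⟩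
  exact normG_nonneg φ α

lemma fill_nonempty (φ : R →+* ℝ) {V : Type*} [Fintype V] [DecidableEq V] (v₀ : V)
    {K : (Fin (d + 1) → V) → ℤ} (hKalt : IsAltChain d K) (hKcl : ∀ g, bdry K g = 0) :
    (FSet φ d K).Nonempty := by
  refine ⟨normG φ (coneChain v₀ (fun f => ((K f : ℤ) : R))),
    coneChain v₀ (fun f => ((K f : ℤ) : R)), cone_alt v₀ (alt_intCast hKalt), ?_, rfl⟩
  intro g
  refine cone_bdry v₀ _ (fun g' => ?_) g
  rw [bdry_intCast, hKcl g']
  simp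

lemma factorial_pos_real : (0:ℝ) < (Nat.factorial (d + 2) : ℝ) := by
  exact_mod_cast Nat.factorial_pos (d+2)

end SF

namespace SF
open Equiv Finset Function
variable {R : Type*} [CommRing R]

theorem union_main {V V' : Type*} [Fintype V] [DecidableEq V] [Fintype V'] [DecidableEq V']
    {d : ℕ} (φ : R →+* ℝ) (hφ : Function.Injective φ) (hd : 1 ≤ d)
    (K : (Fin (d + 1) → V) → ℤ) (K' : (Fin (d + 1) → V') → ℤ)
    (hKalt : IsAltChain d K) (hKcl : ∀ g, bdry K g = 0)
    (hK'alt : IsAltChain d K') (hK'cl : ∀ g, bdry K' g = 0)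
    (v₀ : V) (v₀' : V') :
    sInf (FSet φ d (unionChain K K')) = sInf (FSet φ d K) + sInf (FSet φ d K') := by
  classical
  have h2R : ∀ x : R, x + x = 0 → x = 0 := h2_of_inj hφ
  have hUalt : IsAltChain d (unionChain K K') := by
    intro σ f
    exact alt_add (push_alt Sum.inl hKalt) (push_alt Sum.inr hK'alt) σ f
  have hUcl : ∀ g, bdry (unionChain K K') g = 0 := by
    intro g
    show bdry (fun f => pushChain Sum.inl K f + pushChain Sum.inr K' f) g = 0
    rw [bdry_add, push_closed Sum.inl hKcl g, push_closed Sum.inr hK'cl g, add_zero]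
  refine sInf_add_sInf _ _ _ (fill_nonempty φ v₀ hKalt hKcl) (fill_nonempty φ v₀' hK'alt hK'cl)
    (fill_nonempty φ (Sum.inl v₀) hUalt hUcl) (FSet_nonneg φ K) (FSet_nonneg φ K')
    (FSet_nonneg φ (unionChain K K')) ?_ ?_
  · -- combination : subadditivity
    rintro x ⟨α, hαalt, hαb, rfl⟩ y ⟨α', hα'alt, hα'b, rfl⟩
    refine ⟨normG φ (fun f => pushChain Sum.inl α f + pushChain Sum.inr α' f),
      ⟨_, alt_add (push_alt Sum.inl hαalt) (push_alt Sum.inr hα'alt), ?_, rfl⟩, ?_⟩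
    · intro g
      rw [bdry_add, push_bdry, push_bdry]
      have e1 : bdry α = fun g' => ((K g' : ℤ) : R) := funext hαb
      have e2 : bdry α' = fun g' => ((K' g' : ℤ) : R) := funext hα'b
      rw [e1, e2, push_intCast, push_intCast]
      show _ = ((pushChain Sum.inl K g + pushChain Sum.inr K' g : ℤ) : R)
      push_cast
      ring
    · unfold normG
      rw [← add_div]
      rw [div_le_div_iff_of_pos_right factorial_pos_real]
      calc (∑ f : Fin (d+2) → V ⊕ V', |φ (pushChain Sum.inl α f + pushChain Sum.inr α' f)|)
          ≤ ∑ f : Fin (d+2) → V ⊕ V', (|φ (pushChain Sum.inl α f)| + |φ (pushChain Sum.inr α' f)|) := by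
            refine Finset.sum_le_sum fun f _ => ?_
            rw [map_add]
            exact abs_add_le _ _
        _ = (∑ f : Fin (d+2) → V ⊕ V', |φ (pushChain Sum.inl α f)|)
            + ∑ f : Fin (d+2) → V ⊕ V', |φ (pushChain Sum.inr α' f)| := Finset.sum_add_distrib
        _ ≤ (∑ g : Fin (d+2) → V, |φ (α g)|) + ∑ g : Fin (d+2) → V', |φ (α' g)| :=
            add_le_add (sum_abs_push_le φ Sum.inl α) (sum_abs_push_le φ Sum.inr α')
  · -- splitting : superadditivity
    rintro z ⟨β, hβalt, hβb, rfl⟩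
    have hβbf : bdry β = fun g => ((unionChain K K' g : ℤ) : R) := funext hβb
    set u : V ⊕ V' → V := Sum.elim id (fun _ => v₀) with hudef
    set s : V ⊕ V' → V' := Sum.elim (fun _ => v₀') id with hsdef
    have keyu : ∀ g, pushChain u (unionChain K K') g = K g := by
      intro g
      show pushChain u (fun f => pushChain Sum.inl K f + pushChain Sum.inr K' f) g = K g
      rw [push_add, push_comp, push_comp]
      have e1 : u ∘ Sum.inl = (id : V → V) := Sum.elim_comp_inl _ _
      have e2 : u ∘ Sum.inr = (fun _ : V' => v₀) := Sum.elim_comp_inr _ _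
      rw [e1, e2, push_id]
      have hz := push_small_eq_zero (R := ℤ) hK'alt hK'cl h2Z (fun _ : V' => v₀)
        ({v₀} : Finset V) (by simp) (fun _ => Finset.mem_singleton_self v₀)
        (push_alt _ hK'alt) (push_closed _ hK'cl) g
      rw [hz, add_zero]
    have keys : ∀ g, pushChain s (unionChain K K') g = K' g := by
      intro g
      show pushChain s (fun f => pushChain Sum.inl K f + pushChain Sum.inr K' f) g = K' g
      rw [push_add, push_comp, push_comp]
      have e1 : s ∘ Sum.inl = (fun _ : V => v₀') := Sum.elim_comp_inl _ _
      have e2 : s ∘ Sum.inr = (id : V' → V') := Sum.elim_comp_inr _ _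
      rw [e1, e2, push_id]
      have hz := push_small_eq_zero (R := ℤ) hKalt hKcl h2Z (fun _ : V => v₀')
        ({v₀'} : Finset V') (by simp) (fun _ => Finset.mem_singleton_self v₀')
        (push_alt _ hKalt) (push_closed _ hKcl) g
      rw [hz, zero_add]
    refine ⟨normG φ (pushChain u β), ⟨_, push_alt u hβalt, ?_, rfl⟩,
      normG φ (pushChain s β), ⟨_, push_alt s hβalt, ?_, rfl⟩, ?_⟩
    · intro g
      rw [push_bdry, hβbf, push_intCast]
      rw [keyu g]
    · intro g
      rw [push_bdry, hβbf, push_intCast]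
      rw [keys g]
    · unfold normG
      rw [← add_div]
      rw [div_le_div_iff_of_pos_right factorial_pos_real]
      refine sum_abs_split φ hβalt h2R u s ?_
      rintro g - ⟨h1, h2⟩
      exact union_no_straddle hd v₀ v₀' g h1 h2

end SF

namespace SF
open Equiv Finset Function
variable {R : Type*} [CommRing R]

theorem conn_main {V V' W : Type*} [Fintype V] [DecidableEq V] [Fintype V'] [DecidableEq V']
    [Fintype W] [DecidableEq W]
    {d : ℕ} (φ : R →+* ℝ) (hφ : Function.Injective φ) (hd : 1 ≤ d)
    (K : (Fin (d + 1) → V) → ℤ) (K' : (Fin (d + 1) → V') → ℤ)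
    (hKalt : IsAltChain d K) (hKcl : ∀ g, bdry K g = 0)
    (hK'alt : IsAltChain d K') (hK'cl : ∀ g, bdry K' g = 0)
    (vF : Fin (d + 1) → V) (hvF : Function.Injective vF)
    (vF' : Fin (d + 1) → V') (hvF' : Function.Injective vF')
    (j : V → W) (j' : V' → W) (hj : Function.Injective j) (hj' : Function.Injective j')
    (hmeet : ∀ (v : V) (v' : V'), j v = j' v' → ∃ i, v = vF i)
    (ρ : Equiv.Perm (Fin (d + 1))) (hρ : Equiv.Perm.sign ρ = -1)
    (hglue : ∀ i, j (vF i) = j' (vF' (ρ i))) :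
    sInf (FSet φ d (connSum K K' vF vF' j j'))
      = sInf (FSet φ d K) + sInf (FSet φ d K') := by
  classical
  have h2R : ∀ x : R, x + x = 0 → x = 0 := h2_of_inj hφ
  -- the connected-sum chain is just the sum of the pushforwards
  have hconn : connSum K K' vF vF' j j'
      = fun f => pushChain j K f + pushChain j' K' f := by
    funext f
    show pushChain (Sum.elim j j')
      (fun g => pushChain Sum.inl K g + pushChain Sum.inr K' g
        - pushChain Sum.inl (simplexChain vF) g - pushChain Sum.inr (simplexChain vF') g) f = _
    rw [push_sub, push_sub, push_add, push_comp, push_comp, push_comp, push_comp]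
    rw [Sum.elim_comp_inl, Sum.elim_comp_inr]
    rw [push_simplexChain, push_simplexChain]
    have hjvF : j' ∘ vF' = (j ∘ vF) ∘ ⇑ρ.symm := by
      funext i
      have := hglue (ρ.symm i)
      simp only [Function.comp_apply, Equiv.apply_symm_apply] at this ⊢
      rw [← this]
    rw [hjvF, simplexChain_comp_perm]
    have hsgn : ((Equiv.Perm.sign ρ.symm : ℤ)) = -1 := by
      have : Equiv.Perm.sign ρ.symm = Equiv.Perm.sign ρ := Equiv.Perm.sign_symm ρ
      rw [this, hρ]
      rfl
    rw [hsgn]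
    ring
  have hCalt : IsAltChain d (connSum K K' vF vF' j j') := by
    rw [hconn]
    exact alt_add (push_alt j hKalt) (push_alt j' hK'alt)
  have hCcl : ∀ g, bdry (connSum K K' vF vF' j j') g = 0 := by
    rw [hconn]
    intro g
    rw [bdry_add, push_closed j hKcl g, push_closed j' hK'cl g, add_zero]
  -- retractions
  obtain ⟨i₁, hi₁⟩ : ∃ i₁ : Fin (d + 1), i₁ ≠ ρ 0 := by
    have : 1 < Fintype.card (Fin (d + 1)) := by simp; omega
    exact Fintype.exists_ne_of_one_lt_card this (ρ 0)
  set r : W → V := fun w => if h : ∃ v, j v = w then h.choose else vF 0 with hrdef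
  set s : W → V' := fun w => if h : ∃ v', j' v' = w then h.choose else vF' i₁ with hsdef
  have hr : ∀ w, (∃ v, j v = w) → j (r w) = w := by
    intro w h
    rw [hrdef]
    simp only [dif_pos h]
    exact h.choose_spec
  have hr' : ∀ w, ¬ (∃ v, j v = w) → r w = vF 0 := by
    intro w h; rw [hrdef]; simp only [dif_neg h]
  have hs : ∀ w, (∃ v', j' v' = w) → j' (s w) = w := by
    intro w h
    rw [hsdef]
    simp only [dif_pos h]
    exact h.choose_spec
  have hs' : ∀ w, ¬ (∃ v', j' v' = w) → s w = vF' i₁ := by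
    intro w h; rw [hsdef]; simp only [dif_neg h]
  have hrj : ∀ v, r (j v) = v := fun v => hj (hr (j v) ⟨v, rfl⟩)
  have hsj' : ∀ v', s (j' v') = v' := fun v' => hj' (hs (j' v') ⟨v', rfl⟩)
  -- pushforwards along retractions recover K and K'
  have keyr : ∀ g, pushChain r (connSum K K' vF vF' j j') g = K g := by
    intro g
    rw [hconn, push_add, push_comp, push_comp]
    have e1 : r ∘ j = (id : V → V) := funext hrj
    rw [e1, push_id]
    have hrange : ∀ v', (r ∘ j') v' ∈ Finset.image vF Finset.univ := by
      intro v'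
      by_cases h : ∃ v, j v = j' v'
      · obtain ⟨v, hv⟩ := h
        obtain ⟨k, hk⟩ := hmeet v v' hv
        have : r (j' v') = v := by
          rw [← hv, hrj]
        rw [Function.comp_apply, this, hk]
        exact Finset.mem_image_of_mem vF (Finset.mem_univ k)
      · rw [Function.comp_apply, hr' (j' v') h]
        exact Finset.mem_image_of_mem vF (Finset.mem_univ 0)
    have hz := push_small_eq_zero (R := ℤ) hK'alt hK'cl h2Z (r ∘ j')
      (Finset.image vF Finset.univ)
      (by rw [Finset.card_image_of_injective _ hvF]; simp) hrange
      (push_alt _ hK'alt) (push_closed _ hK'cl) g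
    rw [hz, add_zero]
  have keys : ∀ g, pushChain s (connSum K K' vF vF' j j') g = K' g := by
    intro g
    rw [hconn, push_add, push_comp, push_comp]
    have e2 : s ∘ j' = (id : V' → V') := funext hsj'
    rw [e2, push_id]
    have hrange : ∀ v, (s ∘ j) v ∈ Finset.image vF' Finset.univ := by
      intro v
      by_cases h : ∃ v'', j' v'' = j v
      · obtain ⟨v'', hv''⟩ := h
        obtain ⟨k, hk⟩ := hmeet v v'' hv''.symm
        have hv2 : j' v'' = j' (vF' (ρ k)) := by
          rw [hv'', hk, hglue k]
        have : v'' = vF' (ρ k) := hj' hv2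
        have : s (j v) = vF' (ρ k) := by
          rw [← hv'', this, hsj']
        rw [Function.comp_apply, this]
        exact Finset.mem_image_of_mem vF' (Finset.mem_univ (ρ k))
      · rw [Function.comp_apply, hs' (j v) h]
        exact Finset.mem_image_of_mem vF' (Finset.mem_univ i₁)
    have hz := push_small_eq_zero (R := ℤ) hKalt hKcl h2Z (s ∘ j)
      (Finset.image vF' Finset.univ)
      (by rw [Finset.card_image_of_injective _ hvF']; simp) hrange
      (push_alt _ hKalt) (push_closed _ hKcl) g
    rw [hz, zero_add]
  refine sInf_add_sInf _ _ _ (fill_nonempty φ (vF 0) hKalt hKcl)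
    (fill_nonempty φ (vF' 0) hK'alt hK'cl)
    (fill_nonempty φ (j (vF 0)) hCalt hCcl) (FSet_nonneg φ K) (FSet_nonneg φ K')
    (FSet_nonneg φ _) ?_ ?_
  · -- combination
    rintro x ⟨α, hαalt, hαb, rfl⟩ y ⟨α', hα'alt, hα'b, rfl⟩
    refine ⟨normG φ (pushChain (Sum.elim j j')
        (fun f => pushChain Sum.inl α f + pushChain Sum.inr α' f)),
      ⟨_, push_alt _ (alt_add (push_alt Sum.inl hαalt) (push_alt Sum.inr hα'alt)), ?_, rfl⟩, ?_⟩
    · intro g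
      rw [push_bdry]
      have eb : bdry (fun f => pushChain Sum.inl α f + pushChain Sum.inr α' f)
          = fun g' => (((pushChain Sum.inl K g' + pushChain Sum.inr K' g' : ℤ)) : R) := by
        funext g'
        rw [bdry_add, push_bdry, push_bdry]
        have e1 : bdry α = fun h => ((K h : ℤ) : R) := funext hαb
        have e2 : bdry α' = fun h => ((K' h : ℤ) : R) := funext hα'b
        rw [e1, e2, push_intCast, push_intCast]
        push_cast
        ring
      rw [eb, push_intCast]
      have : pushChain (Sum.elim j j')
          (fun g' => pushChain Sum.inl K g' + pushChain Sum.inr K' g') g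
          = connSum K K' vF vF' j j' g := by
        rw [hconn, push_add, push_comp, push_comp, Sum.elim_comp_inl, Sum.elim_comp_inr]
      rw [this]
    · unfold normG
      rw [← add_div]
      rw [div_le_div_iff_of_pos_right factorial_pos_real]
      calc (∑ f : Fin (d+2) → W, |φ (pushChain (Sum.elim j j')
              (fun f => pushChain Sum.inl α f + pushChain Sum.inr α' f) f)|)
          ≤ ∑ f : Fin (d+2) → V ⊕ V', |φ (pushChain Sum.inl α f + pushChain Sum.inr α' f)| :=
            sum_abs_push_le φ _ _
        _ ≤ ∑ f : Fin (d+2) → V ⊕ V', (|φ (pushChain Sum.inl α f)| + |φ (pushChain Sum.inr α' f)|) := by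
            refine Finset.sum_le_sum fun f _ => ?_
            rw [map_add]
            exact abs_add_le _ _
        _ = (∑ f : Fin (d+2) → V ⊕ V', |φ (pushChain Sum.inl α f)|)
            + ∑ f : Fin (d+2) → V ⊕ V', |φ (pushChain Sum.inr α' f)| := Finset.sum_add_distrib
        _ ≤ (∑ g : Fin (d+2) → V, |φ (α g)|) + ∑ g : Fin (d+2) → V', |φ (α' g)| :=
            add_le_add (sum_abs_push_le φ Sum.inl α) (sum_abs_push_le φ Sum.inr α')
  · -- splitting
    rintro z ⟨β, hβalt, hβb, rfl⟩
    have hβbf : bdry β = fun g => ((connSum K K' vF vF' j j' g : ℤ) : R) := funext hβb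
    refine ⟨normG φ (pushChain r β), ⟨_, push_alt r hβalt, ?_, rfl⟩,
      normG φ (pushChain s β), ⟨_, push_alt s hβalt, ?_, rfl⟩, ?_⟩
    · intro g
      rw [push_bdry, hβbf, push_intCast, keyr g]
    · intro g
      rw [push_bdry, hβbf, push_intCast, keys g]
    · unfold normG
      rw [← add_div]
      rw [div_le_div_iff_of_pos_right factorial_pos_real]
      refine sum_abs_split φ hβalt h2R r s ?_
      rintro g - ⟨h1, h2⟩
      exact conn_no_straddle hd vF vF' j j' hj hj' hmeet ρ hglue i₁ hi₁ r s hr hr' hs hs' g h1 h2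

end SF

namespace SF
open Equiv Finset Function

lemma VZ_eq {V : Type*} [Fintype V] [DecidableEq V] (d : ℕ) (K : (Fin (d + 1) → V) → ℤ) :
    VZ d K = sInf (FSet (Int.castRingHom ℝ) d K) := by
  unfold VZ FSet
  congr 1

lemma VQ_eq {V : Type*} [Fintype V] [DecidableEq V] (d : ℕ) (K : (Fin (d + 1) → V) → ℤ) :
    VQ d K = sInf (FSet (Rat.castHom ℝ) d K) := by
  unfold VQ FSet
  congr 1

end SF

/-- Additivity of the integrality gap `V_ℤ − V_ℚ` under disjoint union and under
connected sum along a facet of each. -/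
theorem stmt13 {V V' W : Type*} [Fintype V] [DecidableEq V]
    [Fintype V'] [DecidableEq V'] [Fintype W] [DecidableEq W] (d : ℕ)
    (K : (Fin (d + 1) → V) → ℤ) (K' : (Fin (d + 1) → V') → ℤ)
    (hK : IsAdmissible d K) (hK' : IsAdmissible d K')
    (vF : Fin (d + 1) → V) (hvF : Function.Injective vF) (hFfacet : K vF = 1)
    (vF' : Fin (d + 1) → V') (hvF' : Function.Injective vF') (hFfacet' : K' vF' = 1)
    (j : V → W) (j' : V' → W) (hj : Function.Injective j) (hj' : Function.Injective j')
    (hcover : ∀ w : W, (∃ v, j v = w) ∨ (∃ v', j' v' = w))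
    (hmeet : ∀ (v : V) (v' : V'), j v = j' v' → ∃ i, v = vF i)
    (ρ : Equiv.Perm (Fin (d + 1))) (hρ : Equiv.Perm.sign ρ = -1)
    (hglue : ∀ i, j (vF i) = j' (vF' (ρ i)))
    (hadm : IsAdmissible d (connSum K K' vF vF' j j')) :
    (VZ d (unionChain K K') - VQ d (unionChain K K')
        = (VZ d K - VQ d K) + (VZ d K' - VQ d K')) ∧
    (VZ d (connSum K K' vF vF' j j') - VQ d (connSum K K' vF vF' j j')
        = (VZ d K - VQ d K) + (VZ d K' - VQ d K')) := by
  rcases Nat.eq_zero_or_pos d with hd0 | hd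
  · -- for d = 0 the hypothesis on ρ is contradictory
    exfalso
    subst hd0
    have hρ1 : ρ = Equiv.refl (Fin 1) := by
      apply Equiv.ext
      intro x
      have h1 := (ρ x).isLt
      have h2 := x.isLt
      apply Fin.ext
      simp only [Equiv.refl_apply]
      omega
    rw [hρ1] at hρ
    simp at hρ
  · have hZu := SF.union_main (Int.castRingHom ℝ) Int.cast_injective hd K K'
      hK.chain hK.closed hK'.chain hK'.closed (vF 0) (vF' 0)
    have hQu := SF.union_main (Rat.castHom ℝ) Rat.cast_injective hd K K'
      hK.chain hK.closed hK'.chain hK'.closed (vF 0) (vF' 0)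
    have hZc := SF.conn_main (Int.castRingHom ℝ) Int.cast_injective hd K K'
      hK.chain hK.closed hK'.chain hK'.closed vF hvF vF' hvF' j j' hj hj' hmeet ρ hρ hglue
    have hQc := SF.conn_main (Rat.castHom ℝ) Rat.cast_injective hd K K'
      hK.chain hK.closed hK'.chain hK'.closed vF hvF vF' hvF' j j' hj hj' hmeet ρ hρ hglue
    rw [SF.VZ_eq, SF.VZ_eq, SF.VZ_eq, SF.VZ_eq, SF.VQ_eq, SF.VQ_eq, SF.VQ_eq, SF.VQ_eq,
      hZu, hQu, hZc, hQc]
    constructor <;> ring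
end
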